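/- arXiv:1412.7197 — 6 statements merged into one kernel-verified Lean document; each statement's English description precedes it below -/
import Mathlib

section
/- Let P be a probability measure on R^d and m ∈ (0,1). For x ∈ R^d, let F_x(t) = P(||X - x||² ≤ t) and F_x^{-1}(m) = inf{t : F_x(t) ≥ m}. Then for all x, x' ∈ R^d, |√(F_{x'}^{-1}(m)) − √(F_x^{-1}(m))| ≤ ||x' − x||. -/
open MeasureTheory Set

noncomputable def distCdf {d : ℕ} (P : Measure (EuclideanSpace ℝ (Fin d)))
    (x : EuclideanSpace ℝ (Fin d)) (t : ℝ) : ℝ :=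
  (P {y | ‖y - x‖ ≤ t}).toReal

noncomputable def sqDistCdf {d : ℕ} (P : Measure (EuclideanSpace ℝ (Fin d)))
    (x : EuclideanSpace ℝ (Fin d)) (t : ℝ) : ℝ :=
  (P {y | ‖y - x‖ ^ 2 ≤ t}).toReal

noncomputable def quantile (F : ℝ → ℝ) (u : ℝ) : ℝ :=
  sInf {t : ℝ | u ≤ F t}

/-- The squared distance-to-measure at resolution `m`:
`δ_{P,m}(x)² = (1/m) ∫_0^m F_x^{-1}(u) du`. -/
noncomputable def dtmSq {d : ℕ} (P : Measure (EuclideanSpace ℝ (Fin d))) (m : ℝ)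
    (x : EuclideanSpace ℝ (Fin d)) : ℝ :=
  (1 / m) * ∫ u in Set.Ioo (0 : ℝ) m, quantile (sqDistCdf P x) u

/-- The distance-to-measure at resolution `m`. -/
noncomputable def dtm {d : ℕ} (P : Measure (EuclideanSpace ℝ (Fin d))) (m : ℝ)
    (x : EuclideanSpace ℝ (Fin d)) : ℝ :=
  Real.sqrt (dtmSq P m x)

section Aux
variable {d : ℕ} {P : Measure (EuclideanSpace ℝ (Fin d))} [IsProbabilityMeasure P]
  {x : EuclideanSpace ℝ (Fin d)} {m : ℝ}

lemma aux_meas (x : EuclideanSpace ℝ (Fin d)) (t : ℝ) :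
    MeasurableSet {y : EuclideanSpace ℝ (Fin d) | ‖y - x‖ ^ 2 ≤ t} :=
  (isClosed_le (by continuity) continuous_const).measurableSet

lemma aux_mono (x : EuclideanSpace ℝ (Fin d)) : Monotone (sqDistCdf P x) := fun s t hst =>
  ENNReal.toReal_mono (measure_ne_top P _) (measure_mono fun y hy => le_trans hy hst)

lemma aux_mem_nonneg (hm : 0 < m) {t : ℝ} (ht : m ≤ sqDistCdf P x t) : 0 ≤ t := by
  by_contra h
  push_neg at h
  have he : {y : EuclideanSpace ℝ (Fin d) | ‖y - x‖ ^ 2 ≤ t} = ∅ := by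
    ext y
    simp only [mem_setOf_eq, mem_empty_iff_false, iff_false, not_le]
    exact lt_of_lt_of_le h (sq_nonneg _)
  rw [sqDistCdf, he] at ht
  simp at ht
  linarith

lemma aux_iff (t : ℝ) : m ≤ sqDistCdf P x t ↔
    ENNReal.ofReal m ≤ P {y | ‖y - x‖ ^ 2 ≤ t} :=
  (ENNReal.ofReal_le_iff_le_toReal (measure_ne_top P _)).symm

lemma aux_nonempty (hm : m < 1) : ∃ t, m ≤ sqDistCdf P x t := by
  have hmono : Monotone (fun n : ℕ => {y : EuclideanSpace ℝ (Fin d) | ‖y - x‖ ^ 2 ≤ (n:ℝ)}) := by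
    intro a b hab y hy
    simp only [mem_setOf_eq] at hy ⊢
    exact le_trans hy (by exact_mod_cast hab)
  have hU : (⋃ n : ℕ, {y : EuclideanSpace ℝ (Fin d) | ‖y - x‖ ^ 2 ≤ (n:ℝ)}) = univ := by
    ext y
    simp only [mem_iUnion, mem_setOf_eq, mem_univ, iff_true]
    obtain ⟨n, hn⟩ := exists_nat_ge (‖y - x‖ ^ 2)
    exact ⟨n, hn⟩
  have := hmono.measure_iUnion (μ := P)
  rw [hU, measure_univ] at this
  have hlt : ENNReal.ofReal m < ⨆ n : ℕ, P {y | ‖y - x‖ ^ 2 ≤ (n:ℝ)} := by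
    rw [← this]; exact ENNReal.ofReal_lt_one.mpr hm
  obtain ⟨n, hn⟩ := lt_iSup_iff.mp hlt
  exact ⟨n, (aux_iff _).mpr hn.le⟩

lemma aux_quantile_mem (hm0 : 0 < m) (hm1 : m < 1) :
    m ≤ sqDistCdf P x (sInf {t : ℝ | m ≤ sqDistCdf P x t}) := by
  set S := {t : ℝ | m ≤ sqDistCdf P x t} with hS
  have hne : S.Nonempty := aux_nonempty hm1
  have hbdd : BddBelow S := ⟨0, fun t ht => aux_mem_nonneg hm0 ht⟩
  set q := sInf S with hq
  have hmem : ∀ n : ℕ, q + 1 / (n + 1) ∈ S := by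
    intro n
    have hpos : (0:ℝ) < 1 / (n + 1) := by positivity
    obtain ⟨s, hs, hs'⟩ := (csInf_lt_iff hbdd hne).mp (by linarith : q < q + 1 / (n + 1))
    exact le_trans hs (aux_mono x hs'.le)
  have hanti : Antitone (fun n : ℕ =>
      {y : EuclideanSpace ℝ (Fin d) | ‖y - x‖ ^ 2 ≤ q + 1 / (n + 1)}) := by
    intro a b hab y hy
    simp only [mem_setOf_eq] at hy ⊢
    have : (1:ℝ) / (b + 1) ≤ 1 / (a + 1) := by
      apply one_div_le_one_div_of_le (by positivity)
      exact_mod_cast by linarith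
    linarith
  have hI : (⋂ n : ℕ, {y : EuclideanSpace ℝ (Fin d) | ‖y - x‖ ^ 2 ≤ q + 1 / (n + 1)})
      = {y | ‖y - x‖ ^ 2 ≤ q} := by
    ext y
    simp only [mem_iInter, mem_setOf_eq]
    constructor
    · intro h
      refine le_of_forall_pos_le_add fun ε hε => ?_
      obtain ⟨n, hn⟩ := exists_nat_one_div_lt hε
      exact le_trans (h n) (by linarith)
    · intro h n
      have : (0:ℝ) < 1 / (n + 1) := by positivity
      linarith
  have htend := tendsto_measure_iInter_atTop (μ := P)
    (fun n => (aux_meas x _).nullMeasurableSet) hanti ⟨0, measure_ne_top _ _⟩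
  rw [hI] at htend
  rw [aux_iff]
  refine ge_of_tendsto htend (Filter.Eventually.of_forall fun n => ?_)
  exact (aux_iff _).mp (hmem n)

lemma aux_sqrt_le (hm0 : 0 < m) (hm1 : m < 1) (x' : EuclideanSpace ℝ (Fin d)) :
    Real.sqrt (quantile (sqDistCdf P x') m)
      ≤ Real.sqrt (quantile (sqDistCdf P x) m) + ‖x' - x‖ := by
  set q := quantile (sqDistCdf P x) m with hqdef
  have hq : m ≤ sqDistCdf P x q := aux_quantile_mem hm0 hm1
  have hq0 : 0 ≤ q := aux_mem_nonneg hm0 hq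
  have hmem : m ≤ sqDistCdf P x' ((Real.sqrt q + ‖x' - x‖) ^ 2) := by
    refine le_trans hq (ENNReal.toReal_mono (measure_ne_top P _) (measure_mono ?_))
    intro y hy
    simp only [mem_setOf_eq] at hy ⊢
    have h1 : ‖y - x‖ ≤ Real.sqrt q := by
      have := Real.sqrt_le_sqrt hy
      rwa [Real.sqrt_sq (norm_nonneg _)] at this
    have h2 : ‖y - x'‖ ≤ ‖y - x‖ + ‖x' - x‖ := by
      have he : y - x' = (y - x) - (x' - x) := by abel
      rw [he]
      exact norm_sub_le _ _
    have h3 : ‖y - x'‖ ≤ Real.sqrt q + ‖x' - x‖ := by linarith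
    exact pow_le_pow_left₀ (norm_nonneg _) h3 2
  have hle : quantile (sqDistCdf P x') m ≤ (Real.sqrt q + ‖x' - x‖) ^ 2 :=
    csInf_le ⟨0, fun t ht => aux_mem_nonneg hm0 ht⟩ hmem
  calc Real.sqrt (quantile (sqDistCdf P x') m)
      ≤ Real.sqrt ((Real.sqrt q + ‖x' - x‖) ^ 2) := Real.sqrt_le_sqrt hle
    _ = Real.sqrt q + ‖x' - x‖ := Real.sqrt_sq (by positivity)

end Aux

/-- `x ↦ √(F_x^{-1}(m))` is 1-Lipschitz:
`|√(F_{x'}^{-1}(m)) − √(F_x^{-1}(m))| ≤ ‖x' − x‖`. -/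
theorem sqrt_quantile_sqDist_lipschitz {d : ℕ}
    (P : Measure (EuclideanSpace ℝ (Fin d))) [IsProbabilityMeasure P]
    (m : ℝ) (hm : m ∈ Set.Ioo (0 : ℝ) 1) (x x' : EuclideanSpace ℝ (Fin d)) :
    |Real.sqrt (quantile (sqDistCdf P x') m) - Real.sqrt (quantile (sqDistCdf P x) m)|
      ≤ ‖x' - x‖ := by
  obtain ⟨hm0, hm1⟩ := hm
  have h1 := aux_sqrt_le (P := P) (x := x) hm0 hm1 x'
  have h2 := aux_sqrt_le (P := P) (x := x') hm0 hm1 x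
  rw [norm_sub_rev] at h2
  rw [abs_sub_le_iff]
  constructor <;> linarith
end

section
/- The distance-to-measure function is 1-Lipschitz: for any probability measure P on R^d, any m ∈ (0,1), and any x, x' ∈ R^d, |δ_{P,m}(x) − δ_{P,m}(x')| ≤ ||x − x'||. -/
open MeasureTheory Set

/-!
The squared distance from `x` is dominated by `(‖· - x'‖ + ‖x - x'‖)²`, so the quantile
functions satisfy `√(F_x⁻¹ u) ≤ √(F_{x'}⁻¹ u) + ‖x - x'‖` for `0 < u < 1`. Since `δ_{P,m}(x)`
is the `L²` norm of `u ↦ √(F_x⁻¹ u)` for the uniform probability on `(0, m)`, Minkowski's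
inequality gives `δ_{P,m}(x) ≤ δ_{P,m}(x') + ‖x - x'‖`.
-/

open Filter Topology

section

variable {α : Type*} [MeasurableSpace α] {μ : Measure α} [IsFiniteMeasure μ]

theorem integral_le_sqrt_measureReal_univ_mul_sqrt_integral_sq {g : α → ℝ}
    (hg0 : 0 ≤ᵐ[μ] g) (hg : MemLp g 2 μ) :
    ∫ a, g a ∂μ ≤ √(μ.real univ) * √(∫ a, g a ^ 2 ∂μ) := by
  have h := integral_mul_le_Lp_mul_Lq_of_nonneg Real.HolderConjugate.two_two hg0
    (ae_of_all μ fun _ => zero_le_one) (by simpa using hg) (by simpa using memLp_const (1 : ℝ))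
  simp only [mul_one, one_pow, Real.rpow_two, integral_const, smul_eq_mul] at h
  rw [mul_comm, Real.sqrt_eq_rpow, Real.sqrt_eq_rpow]
  simpa using h

theorem sqrt_integral_sq_le_of_le_add {f g : α → ℝ} {c : ℝ} (hc : 0 ≤ c)
    (hf0 : 0 ≤ᵐ[μ] f) (hg0 : 0 ≤ᵐ[μ] g) (hg : MemLp g 2 μ) (hfg : ∀ᵐ a ∂μ, f a ≤ g a + c) :
    √(∫ a, f a ^ 2 ∂μ) ≤ √(∫ a, g a ^ 2 ∂μ) + c * √(μ.real univ) := by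
  set G := ∫ a, g a ^ 2 ∂μ
  have hG : 0 ≤ G := integral_nonneg fun _ => sq_nonneg _
  have hg1 : Integrable g μ := hg.integrable one_le_two
  have hg2 : Integrable (fun a => g a ^ 2) μ := hg.integrable_sq
  have hexpand : ∫ a, (g a + c) ^ 2 ∂μ = G + 2 * c * ∫ a, g a ∂μ + c ^ 2 * μ.real univ := by
    have hlin : Integrable (fun a => 2 * g a * c) μ := (hg1.const_mul 2).mul_const c
    have hsum : Integrable (fun a => g a ^ 2 + 2 * g a * c) μ := hg2.add hlin
    simp_rw [add_sq]
    rw [integral_add hsum (integrable_const _), integral_add hg2 hlin,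
      integral_mul_const, integral_const_mul, integral_const, smul_eq_mul]
    ring
  have hsq : ∫ a, f a ^ 2 ∂μ ≤ (√G + c * √(μ.real univ)) ^ 2 := calc
    ∫ a, f a ^ 2 ∂μ ≤ ∫ a, (g a + c) ^ 2 ∂μ := by
      refine integral_mono_of_nonneg (ae_of_all μ fun _ => sq_nonneg _) ?_ ?_
      · exact (hg.add (memLp_const c)).integrable_sq
      · filter_upwards [hf0, hfg] with a hfa hfga
        exact pow_le_pow_left₀ hfa hfga 2
    _ = G + 2 * c * ∫ a, g a ∂μ + c ^ 2 * μ.real univ := hexpand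
    _ ≤ G + 2 * c * (√(μ.real univ) * √G) + c ^ 2 * μ.real univ := by
      gcongr
      exact integral_le_sqrt_measureReal_univ_mul_sqrt_integral_sq hg0 hg
    _ = (√G + c * √(μ.real univ)) ^ 2 := by
      rw [add_sq, mul_pow, Real.sq_sqrt hG, Real.sq_sqrt measureReal_nonneg]
      ring
  exact Real.sqrt_le_iff.2 ⟨by positivity, hsq⟩

end

theorem quantile_le_comp_quantile {F G φ : ℝ → ℝ} {u : ℝ} (hφ : Monotone φ)
    (hφc : Continuous φ) (hGF : ∀ t, G t ≤ F (φ t)) (hF : BddBelow {t | u ≤ F t})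
    (hG : {t | u ≤ G t}.Nonempty) (hG' : BddBelow {t | u ≤ G t}) :
    quantile F u ≤ φ (quantile G u) := by
  rw [quantile, quantile, hφ.map_csInf_of_continuousAt hφc.continuousAt hG hG']
  refine le_csInf (hG.image φ) ?_
  rintro _ ⟨t, ht, rfl⟩
  exact csInf_le hF (le_trans ht (hGF t))

section DistanceToMeasure

variable {d : ℕ} (P : Measure (EuclideanSpace ℝ (Fin d)))

theorem sqDistCdf_eq_zero_of_neg (z : EuclideanSpace ℝ (Fin d)) {t : ℝ} (ht : t < 0) :
    sqDistCdf P z t = 0 := by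
  have hempty : {y : EuclideanSpace ℝ (Fin d) | ‖y - z‖ ^ 2 ≤ t} = ∅ :=
    eq_empty_of_forall_notMem fun y hy => (sq_nonneg ‖y - z‖).not_gt (lt_of_le_of_lt hy ht)
  simp [sqDistCdf, hempty]

theorem nonneg_of_le_sqDistCdf (z : EuclideanSpace ℝ (Fin d)) {u t : ℝ} (hu : 0 < u)
    (ht : u ≤ sqDistCdf P z t) : 0 ≤ t :=
  not_lt.1 fun h => (ht.trans (sqDistCdf_eq_zero_of_neg P z h).le).not_gt hu

theorem quantile_sqDistCdf_of_nonpos (z : EuclideanSpace ℝ (Fin d)) {u : ℝ} (hu : u ≤ 0) :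
    quantile (sqDistCdf P z) u = 0 := by
  have huniv : {t | u ≤ sqDistCdf P z t} = univ :=
    eq_univ_of_forall fun _ => hu.trans ENNReal.toReal_nonneg
  rw [quantile, huniv, Real.sInf_univ]

theorem quantile_sqDistCdf_nonneg (z : EuclideanSpace ℝ (Fin d)) (u : ℝ) :
    0 ≤ quantile (sqDistCdf P z) u := by
  rcases le_or_gt u 0 with hu | hu
  · rw [quantile_sqDistCdf_of_nonpos P z hu]
  · exact Real.sInf_nonneg fun t ht => nonneg_of_le_sqDistCdf P z hu ht

theorem tendsto_sqDistCdf_atTop [IsFiniteMeasure P] (z : EuclideanSpace ℝ (Fin d)) :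
    Tendsto (sqDistCdf P z) atTop (𝓝 (P.real univ)) := by
  have hmono : Monotone fun t : ℝ => {y : EuclideanSpace ℝ (Fin d) | ‖y - z‖ ^ 2 ≤ t} :=
    fun _ _ hst _ hy => le_trans hy hst
  have hunion : (⋃ t : ℝ, {y : EuclideanSpace ℝ (Fin d) | ‖y - z‖ ^ 2 ≤ t}) = univ :=
    eq_univ_of_forall fun y => mem_iUnion.2 ⟨_, le_refl (‖y - z‖ ^ 2)⟩
  have h := tendsto_measure_iUnion_atTop (μ := P) hmono
  rw [hunion] at h
  exact (ENNReal.tendsto_toReal (measure_ne_top P univ)).comp h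

theorem exists_le_sqDistCdf [IsFiniteMeasure P] (z : EuclideanSpace ℝ (Fin d)) {u : ℝ}
    (hu : u < P.real univ) : ∃ t, u ≤ sqDistCdf P z t :=
  ((tendsto_sqDistCdf_atTop P z).eventually (eventually_ge_nhds hu)).exists

theorem quantile_sqDistCdf_monotoneOn [IsFiniteMeasure P] (z : EuclideanSpace ℝ (Fin d)) :
    MonotoneOn (quantile (sqDistCdf P z)) (Iio (P.real univ)) := by
  intro u _ v hv huv
  rcases le_or_gt u 0 with hu0 | hu0
  · rw [quantile_sqDistCdf_of_nonpos P z hu0]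
    exact quantile_sqDistCdf_nonneg P z v
  · exact csInf_le_csInf ⟨0, fun t ht => nonneg_of_le_sqDistCdf P z hu0 ht⟩
      (exists_le_sqDistCdf P z hv) fun t ht => huv.trans ht

theorem integrableOn_quantile_sqDistCdf [IsFiniteMeasure P] (z : EuclideanSpace ℝ (Fin d))
    {m : ℝ} (hm : m < P.real univ) : IntegrableOn (quantile (sqDistCdf P z)) (Ioo 0 m) :=
  (((quantile_sqDistCdf_monotoneOn P z).mono fun _ hu => hu.2.trans_lt hm).integrableOn_isCompact
    isCompact_Icc).mono_set Ioo_subset_Icc_self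

theorem sqDistCdf_le_sqDistCdf_sq_sqrt_add [IsFiniteMeasure P] (x x' : EuclideanSpace ℝ (Fin d))
    (t : ℝ) : sqDistCdf P x' t ≤ sqDistCdf P x ((√t + ‖x - x'‖) ^ 2) := by
  refine measureReal_mono fun y hy => ?_
  have hy' : ‖y - x'‖ ≤ √t := Real.le_sqrt_of_sq_le hy
  have htri : ‖y - x‖ ≤ ‖y - x'‖ + ‖x - x'‖ := by
    simpa [norm_sub_rev x x'] using norm_sub_le_norm_sub_add_norm_sub y x' x
  exact pow_le_pow_left₀ (norm_nonneg _) (by linarith) 2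

theorem sqrt_quantile_sqDistCdf_le [IsFiniteMeasure P] (x x' : EuclideanSpace ℝ (Fin d)) {u : ℝ}
    (hu0 : 0 < u) (hu : u < P.real univ) :
    √(quantile (sqDistCdf P x) u) ≤ √(quantile (sqDistCdf P x') u) + ‖x - x'‖ := by
  have hφ : Monotone fun t => (√t + ‖x - x'‖) ^ 2 := fun s t hst => by
    dsimp only
    gcongr
  have hle := quantile_le_comp_quantile hφ (by fun_prop)
    (sqDistCdf_le_sqDistCdf_sq_sqrt_add P x x') ⟨0, fun t => nonneg_of_le_sqDistCdf P x hu0⟩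
    (exists_le_sqDistCdf P x' hu) ⟨0, fun t => nonneg_of_le_sqDistCdf P x' hu0⟩
  calc √(quantile (sqDistCdf P x) u) ≤ √((√(quantile (sqDistCdf P x') u) + ‖x - x'‖) ^ 2) :=
        Real.sqrt_le_sqrt hle
    _ = √(quantile (sqDistCdf P x') u) + ‖x - x'‖ := Real.sqrt_sq (by positivity)

theorem dtm_eq_sqrt_integral_sq_sqrt_div (m : ℝ) (x : EuclideanSpace ℝ (Fin d)) :
    dtm P m x = √(∫ u in Ioo 0 m, √(quantile (sqDistCdf P x) u) ^ 2) / √m := by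
  simp_rw [Real.sq_sqrt (quantile_sqDistCdf_nonneg P x _)]
  rw [dtm, dtmSq, Real.sqrt_mul' _ (setIntegral_nonneg measurableSet_Ioo fun u _ =>
    quantile_sqDistCdf_nonneg P x u), one_div, Real.sqrt_inv, inv_mul_eq_div]

theorem dtm_le_dtm_add_norm_sub [IsFiniteMeasure P] (x x' : EuclideanSpace ℝ (Fin d)) {m : ℝ}
    (hm0 : 0 < m) (hm : m < P.real univ) : dtm P m x ≤ dtm P m x' + ‖x - x'‖ := by
  have hQ' := integrableOn_quantile_sqDistCdf P x' hm
  have hL2 : MemLp (fun u => √(quantile (sqDistCdf P x') u)) 2 (volume.restrict (Ioo 0 m)) := by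
    refine (memLp_two_iff_integrable_sq
      (Real.continuous_sqrt.comp_aestronglyMeasurable hQ'.aestronglyMeasurable)).2 ?_
    simpa only [Real.sq_sqrt (quantile_sqDistCdf_nonneg P x' _)] using hQ'.integrable
  have hminkowski := sqrt_integral_sq_le_of_le_add (norm_nonneg (x - x'))
    (ae_of_all _ fun _ => Real.sqrt_nonneg _) (ae_of_all _ fun _ => Real.sqrt_nonneg _) hL2
    (ae_restrict_of_forall_mem measurableSet_Ioo fun u hu =>
      sqrt_quantile_sqDistCdf_le P x x' hu.1 (hu.2.trans hm))
  rw [measureReal_restrict_apply_univ, Real.volume_real_Ioo_of_le hm0.le, sub_zero] at hminkowski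
  have hsqrt_m : 0 < √m := Real.sqrt_pos.2 hm0
  rw [dtm_eq_sqrt_integral_sq_sqrt_div, dtm_eq_sqrt_integral_sq_sqrt_div, div_le_iff₀ hsqrt_m,
    add_mul, div_mul_cancel₀ _ hsqrt_m.ne']
  exact hminkowski

end DistanceToMeasure

/-- the distance-to-measure is 1-Lipschitz:
`|δ_{P,m}(x) − δ_{P,m}(x')| ≤ ‖x − x'‖`. -/
theorem dtm_lipschitz {d : ℕ}
    (P : Measure (EuclideanSpace ℝ (Fin d))) [IsProbabilityMeasure P]
    (m : ℝ) (hm : m ∈ Set.Ioo (0 : ℝ) 1) (x x' : EuclideanSpace ℝ (Fin d)) :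
    |dtm P m x - dtm P m x'| ≤ ‖x - x'‖ := by
  have hm1 : m < P.real univ := by simpa using hm.2
  rw [abs_sub_le_iff]
  constructor
  · linarith [dtm_le_dtm_add_norm_sub P x x' hm.1 hm1]
  · linarith [dtm_le_dtm_add_norm_sub P x' x hm.1 hm1, norm_sub_rev x x']
end

section
/- Let P and Q be probability measures on R^d with finite second moments and let m ∈ (0,1). Then sup_{x ∈ R^d} |δ_{P,m}(x) − δ_{Q,m}(x)| ≤ W_2(P,Q)/√m, where W_2 is the Wasserstein distance of order 2. -/
open MeasureTheory Set
open scoped ENNReal NNReal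

noncomputable def W2sq {d : ℕ} (P Q : Measure (EuclideanSpace ℝ (Fin d))) : ℝ≥0∞ :=
  ⨅ (J : Measure (EuclideanSpace ℝ (Fin d) × EuclideanSpace ℝ (Fin d)))
    (_ : J.map Prod.fst = P) (_ : J.map Prod.snd = Q),
      ∫⁻ p, ENNReal.ofReal (‖p.1 - p.2‖ ^ 2) ∂J

noncomputable def W2 {d : ℕ} (P Q : Measure (EuclideanSpace ℝ (Fin d))) : ℝ :=
  Real.sqrt (W2sq P Q).toReal


/-!
Let `R_P` be the quantile function of the law of `‖Y - x‖`, `Y ∼ P`. On `(0, 1)` the quantile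
function of `‖Y - x‖²` is `R_P²`, so `δ_{P,m}(x) = ‖R_P‖_{L²(0,m)} / √m`, and the reverse triangle
inequality in `L²(0, m)` bounds `|δ_{P,m}(x) - δ_{Q,m}(x)|` by `‖R_P - R_Q‖_{L²(0,1)} / √m`.

On the line the quantile coupling is optimal: for nonnegative `X ∼ μ`, `Y ∼ ν` coupled by `J`,
`J(X > s, Y > t) ≤ min (μ(s, ∞)) (ν(t, ∞))`, and the right side is exactly the Lebesgue measure of
`{u | s < R_μ u, t < R_ν u}`. Integrating over `s, t > 0` (layer cake) gives
`E_J[XY] ≤ ∫₀¹ R_μ R_ν`, and since both couplings have the same second moments,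
`‖R_μ - R_ν‖_{L²(0,1)} ≤ ‖X - Y‖_{L²(J)}`. A coupling of `P` and `Q` induces one of the two
distance laws, and `|‖y - x‖ - ‖y' - x‖| ≤ ‖y - y'‖`, so `‖R_P - R_Q‖_{L²(0,1)} ≤ W₂(P, Q)`.
-/

open ProbabilityTheory Filter Topology

theorem ae_map_nonneg {Ω : Type*} [MeasurableSpace Ω] {J : Measure Ω} {F : Ω → ℝ}
    (hF : AEMeasurable F J) (hF0 : 0 ≤ᵐ[J] F) : ∀ᵐ y ∂J.map F, 0 ≤ y :=
  (ae_map_iff hF measurableSet_Ici).2 hF0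

section Quantile

variable {μ ν : Measure ℝ} {u s t : ℝ}

theorem quantile_cdf_le_iff (hu : u ∈ Ioo 0 1) :
    quantile (cdf μ) u ≤ t ↔ u ≤ cdf μ t := by
  have hne : {t | u ≤ cdf μ t}.Nonempty :=
    ((tendsto_cdf_atTop μ).eventually (eventually_ge_nhds hu.2)).exists
  obtain ⟨t₀, ht₀⟩ :=
    eventually_atBot.1 ((tendsto_cdf_atBot μ).eventually (eventually_lt_nhds hu.1))
  have hbdd : BddBelow {t | u ≤ cdf μ t} :=
    ⟨t₀, fun t ht => le_of_not_ge fun h => (ht₀ t h).not_ge ht⟩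
  refine ⟨fun h => ?_, fun h => csInf_le hbdd h⟩
  have hright : ∀ t ∈ Ioi (quantile (cdf μ) u), u ≤ cdf μ t := fun t ht =>
    let ⟨s, hs, hst⟩ := (csInf_lt_iff hbdd hne).1 ht
    hs.trans (monotone_cdf μ hst.le)
  have hq : u ≤ cdf μ (quantile (cdf μ) u) :=
    ge_of_tendsto (((cdf μ).right_continuous _).mono Ioi_subset_Ici_self)
      (eventually_nhdsWithin_of_forall hright)
  exact hq.trans (monotone_cdf μ h)

theorem lt_quantile_cdf_iff (hu : u ∈ Ioo 0 1) : s < quantile (cdf μ) u ↔ cdf μ s < u := by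
  simpa only [not_le] using (quantile_cdf_le_iff (μ := μ) (t := s) hu).not

theorem monotoneOn_quantile_cdf : MonotoneOn (quantile (cdf μ)) (Ioo 0 1) :=
  fun _ hu _ hv huv => (quantile_cdf_le_iff hu).2 (huv.trans ((quantile_cdf_le_iff hv).1 le_rfl))

theorem aemeasurable_quantile_cdf :
    AEMeasurable (quantile (cdf μ)) (volume.restrict (Ioo 0 1)) :=
  aemeasurable_restrict_of_monotoneOn measurableSet_Ioo monotoneOn_quantile_cdf

theorem setOf_lt_quantile_cdf_inter_Ioo (s : ℝ) :
    {u | s < quantile (cdf μ) u} ∩ Ioo 0 1 = Ioo (cdf μ s) 1 := by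
  ext u
  simp only [mem_inter_iff, mem_ofPred_eq, mem_Ioo]
  constructor
  · rintro ⟨h, hu⟩
    exact ⟨(lt_quantile_cdf_iff hu).1 h, hu.2⟩
  · rintro ⟨h, h1⟩
    have hu : u ∈ Ioo 0 1 := ⟨(cdf_nonneg μ s).trans_lt h, h1⟩
    exact ⟨(lt_quantile_cdf_iff hu).2 h, hu⟩

variable [IsProbabilityMeasure μ] [IsProbabilityMeasure ν]

theorem measure_Ioi_eq_ofReal_one_sub_cdf (s : ℝ) :
    μ (Ioi s) = ENNReal.ofReal (1 - cdf μ s) := by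
  rw [← compl_Iic, prob_compl_eq_one_sub measurableSet_Iic, ← ofReal_cdf,
    ENNReal.ofReal_sub _ (cdf_nonneg μ s), ENNReal.ofReal_one]

theorem volume_restrict_Ioo_setOf_lt_quantile_cdf (s : ℝ) :
    volume.restrict (Ioo 0 1) {u | s < quantile (cdf μ) u} = μ (Ioi s) := by
  rw [Measure.restrict_apply' measurableSet_Ioo, setOf_lt_quantile_cdf_inter_Ioo,
    Real.volume_Ioo, measure_Ioi_eq_ofReal_one_sub_cdf]

theorem volume_restrict_Ioo_inter_setOf_lt_quantile_cdf (s t : ℝ) :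
    volume.restrict (Ioo 0 1) ({u | s < quantile (cdf μ) u} ∩ {u | t < quantile (cdf ν) u})
      = min (μ (Ioi s)) (ν (Ioi t)) := by
  rw [Measure.restrict_apply' measurableSet_Ioo, inter_inter_distrib_right,
    setOf_lt_quantile_cdf_inter_Ioo, setOf_lt_quantile_cdf_inter_Ioo, Ioo_inter_Ioo, min_self,
    Real.volume_Ioo, measure_Ioi_eq_ofReal_one_sub_cdf, measure_Ioi_eq_ofReal_one_sub_cdf,
    ← min_sub_sub_left, ENNReal.ofReal_mono.map_min]

instance isProbabilityMeasure_volume_restrict_Ioo_zero_one :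
    IsProbabilityMeasure (volume.restrict (Ioo (0 : ℝ) 1)) :=
  ⟨by simp⟩

theorem map_quantile_cdf : (volume.restrict (Ioo 0 1)).map (quantile (cdf μ)) = μ := by
  have := Measure.isProbabilityMeasure_map (μ := volume.restrict (Ioo (0 : ℝ) 1))
    (aemeasurable_quantile_cdf (μ := μ))
  refine Measure.ext_of_Iic _ _ fun t => ?_
  rw [← compl_Ioi, prob_compl_eq_one_sub measurableSet_Ioi,
    prob_compl_eq_one_sub measurableSet_Ioi,
    Measure.map_apply_of_aemeasurable aemeasurable_quantile_cdf measurableSet_Ioi]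
  exact congrArg _ (volume_restrict_Ioo_setOf_lt_quantile_cdf t)

theorem cdf_eq_zero_of_ae_nonneg (h : ∀ᵐ y ∂μ, 0 ≤ y) (ht : t < 0) : cdf μ t = 0 := by
  have : μ (Iic t) = 0 :=
    measure_mono_null (fun y hy => not_le.2 (lt_of_le_of_lt hy ht)) (ae_iff.1 h)
  rw [cdf_eq_real, measureReal_def, this, ENNReal.toReal_zero]

theorem quantile_cdf_nonneg (h : ∀ᵐ y ∂μ, 0 ≤ y) (hu : u ∈ Ioo 0 1) :
    0 ≤ quantile (cdf μ) u :=
  le_of_not_gt fun hq =>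
    hu.1.not_ge (((quantile_cdf_le_iff hu).1 le_rfl).trans_eq (cdf_eq_zero_of_ae_nonneg h hq))

theorem ae_restrict_Ioo_quantile_cdf_nonneg (h : ∀ᵐ y ∂μ, 0 ≤ y) :
    0 ≤ᵐ[volume.restrict (Ioo 0 1)] quantile (cdf μ) :=
  ae_restrict_of_forall_mem measurableSet_Ioo fun _ hu => quantile_cdf_nonneg h hu

theorem quantile_cdf_map_sq (h : ∀ᵐ y ∂μ, 0 ≤ y) (hu : u ∈ Ioo 0 1) :
    quantile (cdf (μ.map (· ^ 2))) u = quantile (cdf μ) u ^ 2 := by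
  have := Measure.isProbabilityMeasure_map (μ := μ) (f := (· ^ 2 : ℝ → ℝ)) (by fun_prop)
  have hq := quantile_cdf_nonneg h hu
  refine eq_of_forall_ge_iff fun t => ?_
  rw [quantile_cdf_le_iff hu]
  rcases lt_or_ge t 0 with ht | ht
  · have hsq : ∀ᵐ y ∂μ.map (· ^ 2), (0 : ℝ) ≤ y :=
      ae_map_nonneg (by fun_prop) (ae_of_all _ fun y => sq_nonneg y)
    rw [cdf_eq_zero_of_ae_nonneg hsq ht]
    exact iff_of_false hu.1.not_ge (ht.trans_le (sq_nonneg _)).not_ge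
  · have hcdf : cdf (μ.map (· ^ 2)) t = cdf μ √t := by
      rw [cdf_eq_real, cdf_eq_real, map_measureReal_apply (by fun_prop) measurableSet_Iic]
      refine measureReal_congr ?_
      filter_upwards [h] with y hy
      exact propext (Real.le_sqrt hy ht).symm
    rw [hcdf, ← quantile_cdf_le_iff hu, Real.le_sqrt hq ht]

end Quantile

section LayerCake

variable {α : Type*} [MeasurableSpace α] {μ : Measure α} {f g : α → ℝ}

theorem lintegral_ofReal_mul_ofReal_eq_lintegral_measure_inter [SFinite μ]
    (hf : AEMeasurable f μ) (hg : AEMeasurable g μ) (hf0 : 0 ≤ᵐ[μ] f) (hg0 : 0 ≤ᵐ[μ] g) :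
    ∫⁻ a, ENNReal.ofReal (f a) * ENNReal.ofReal (g a) ∂μ
      = ∫⁻ s in Ioi 0, ∫⁻ t in Ioi 0, μ ({a | s < f a} ∩ {a | t < g a}) := by
  have hac := withDensity_absolutelyContinuous μ fun a => ENNReal.ofReal (g a)
  calc ∫⁻ a, ENNReal.ofReal (f a) * ENNReal.ofReal (g a) ∂μ
      = ∫⁻ a, ENNReal.ofReal (f a) ∂μ.withDensity fun a => ENNReal.ofReal (g a) := by
        rw [lintegral_withDensity_eq_lintegral_mul₀ hg.ennreal_ofReal hf.ennreal_ofReal]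
        simp only [Pi.mul_apply, mul_comm]
    _ = ∫⁻ s in Ioi 0, (μ.withDensity fun a => ENNReal.ofReal (g a)) {a | s < f a} :=
        lintegral_eq_lintegral_meas_lt _ (hac.ae_le hf0) (hf.mono_ac hac)
    _ = _ := by
        refine lintegral_congr fun s => ?_
        rw [withDensity_apply',
          lintegral_eq_lintegral_meas_lt _ (ae_restrict_of_ae hg0) hg.restrict]
        refine lintegral_congr fun t => ?_
        rw [Measure.restrict_apply₀' (nullMeasurableSet_lt aemeasurable_const hf), inter_comm]

theorem lintegral_ofReal_sq_sub_add_two_mul (hf : AEMeasurable f μ) (hg : AEMeasurable g μ)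
    (hf0 : 0 ≤ᵐ[μ] f) (hg0 : 0 ≤ᵐ[μ] g) :
    ∫⁻ a, ENNReal.ofReal ((f a - g a) ^ 2) ∂μ
        + 2 * ∫⁻ a, ENNReal.ofReal (f a) * ENNReal.ofReal (g a) ∂μ
      = ∫⁻ a, ENNReal.ofReal (f a ^ 2) ∂μ + ∫⁻ a, ENNReal.ofReal (g a ^ 2) ∂μ := by
  have hdiff : AEMeasurable (fun a => ENNReal.ofReal ((f a - g a) ^ 2)) μ := by fun_prop
  have hsq : AEMeasurable (fun a => ENNReal.ofReal (f a ^ 2)) μ := by fun_prop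
  rw [← lintegral_const_mul' _ _ ENNReal.ofNat_ne_top, ← lintegral_add_left' hdiff,
    ← lintegral_add_left' hsq]
  refine lintegral_congr_ae ?_
  filter_upwards [hf0, hg0] with a ha hb
  rw [← ENNReal.ofReal_mul ha, ← ENNReal.ofReal_ofNat 2, ← ENNReal.ofReal_mul zero_le_two,
    ← ENNReal.ofReal_add (sq_nonneg _) (mul_nonneg zero_le_two (mul_nonneg ha hb)),
    ← ENNReal.ofReal_add (sq_nonneg _) (sq_nonneg _)]
  ring_nf

end LayerCake

section Lp

variable {α E : Type*} [MeasurableSpace α] {μ : Measure α} [NormedAddCommGroup E] {f g : α → E}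

theorem eLpNorm_two_sq_eq_lintegral (f : α → E) :
    eLpNorm f 2 μ ^ 2 = ∫⁻ a, ENNReal.ofReal (‖f a‖ ^ 2) ∂μ := by
  have h := eLpNorm_nnreal_pow_eq_lintegral (μ := μ) (f := f) (p := 2) two_ne_zero
  simp only [ENNReal.coe_ofNat, NNReal.coe_ofNat, ENNReal.rpow_two] at h
  rw [h]
  refine lintegral_congr fun a => ?_
  rw [ENNReal.ofReal_pow (norm_nonneg _), ofReal_norm]

theorem memLp_two_iff_lintegral_ofReal_sq_ne_top (hf : AEStronglyMeasurable f μ) :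
    MemLp f 2 μ ↔ ∫⁻ a, ENNReal.ofReal (‖f a‖ ^ 2) ∂μ ≠ ⊤ := by
  rw [← eLpNorm_two_sq_eq_lintegral, ne_eq, ENNReal.pow_eq_top_iff]
  simp [MemLp, hf, lt_top_iff_ne_top]

theorem abs_toReal_eLpNorm_sub_toReal_eLpNorm_le {p : ℝ≥0∞} [Fact (1 ≤ p)]
    (hf : MemLp f p μ) (hg : MemLp g p μ) :
    |(eLpNorm f p μ).toReal - (eLpNorm g p μ).toReal| ≤ (eLpNorm (f - g) p μ).toReal := by
  simpa only [Lp.norm_toLp, ← MemLp.toLp_sub] using abs_norm_sub_norm_le (hf.toLp f) (hg.toLp g)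

end Lp

section QuantileCoupling

variable {Ω : Type*} [MeasurableSpace Ω] {J : Measure Ω} [IsProbabilityMeasure J] {F G : Ω → ℝ}

theorem lintegral_comp_quantile_cdf_map (hF : AEMeasurable F J) {φ : ℝ → ℝ≥0∞}
    (hφ : Measurable φ) :
    ∫⁻ u in Ioo 0 1, φ (quantile (cdf (J.map F)) u) = ∫⁻ ω, φ (F ω) ∂J := by
  have := Measure.isProbabilityMeasure_map hF
  rw [← lintegral_map' hφ.aemeasurable aemeasurable_quantile_cdf, map_quantile_cdf,
    lintegral_map' hφ.aemeasurable hF]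

theorem lintegral_mul_le_lintegral_quantile_cdf_mul (hF : AEMeasurable F J)
    (hG : AEMeasurable G J) (hF0 : 0 ≤ᵐ[J] F) (hG0 : 0 ≤ᵐ[J] G) :
    ∫⁻ ω, ENNReal.ofReal (F ω) * ENNReal.ofReal (G ω) ∂J
      ≤ ∫⁻ u in Ioo 0 1, ENNReal.ofReal (quantile (cdf (J.map F)) u)
          * ENNReal.ofReal (quantile (cdf (J.map G)) u) := by
  have := Measure.isProbabilityMeasure_map hF
  have := Measure.isProbabilityMeasure_map hG
  rw [lintegral_ofReal_mul_ofReal_eq_lintegral_measure_inter hF hG hF0 hG0,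
    lintegral_ofReal_mul_ofReal_eq_lintegral_measure_inter aemeasurable_quantile_cdf
      aemeasurable_quantile_cdf
      (ae_restrict_Ioo_quantile_cdf_nonneg (ae_map_nonneg hF hF0))
      (ae_restrict_Ioo_quantile_cdf_nonneg (ae_map_nonneg hG hG0))]
  refine lintegral_mono fun s => lintegral_mono fun t => ?_
  rw [volume_restrict_Ioo_inter_setOf_lt_quantile_cdf,
    Measure.map_apply_of_aemeasurable hF measurableSet_Ioi,
    Measure.map_apply_of_aemeasurable hG measurableSet_Ioi]
  exact le_min (measure_mono inter_subset_left) (measure_mono inter_subset_right)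

theorem eLpNorm_quantile_cdf_map_sub_le (hF : MemLp F 2 J) (hG : MemLp G 2 J)
    (hF0 : 0 ≤ᵐ[J] F) (hG0 : 0 ≤ᵐ[J] G) :
    eLpNorm (quantile (cdf (J.map F)) - quantile (cdf (J.map G))) 2 (volume.restrict (Ioo 0 1))
      ≤ eLpNorm (F - G) 2 J := by
  have := Measure.isProbabilityMeasure_map hF.aemeasurable
  have := Measure.isProbabilityMeasure_map hG.aemeasurable
  have hsecond : ∀ {H : Ω → ℝ}, MemLp H 2 J → ∫⁻ u in Ioo 0 1,
      ENNReal.ofReal (quantile (cdf (J.map H)) u ^ 2) = ∫⁻ ω, ENNReal.ofReal (H ω ^ 2) ∂J :=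
    fun hH => lintegral_comp_quantile_cdf_map hH.aemeasurable
      (φ := fun y => ENNReal.ofReal (y ^ 2)) (by fun_prop)
  have hfin : ∀ {H : Ω → ℝ}, MemLp H 2 J → ∫⁻ ω, ENNReal.ofReal (H ω ^ 2) ∂J ≠ ⊤ :=
    fun hH => by simpa only [Real.norm_eq_abs, sq_abs] using
      (memLp_two_iff_lintegral_ofReal_sq_ne_top hH.1).1 hH
  have hquantile := lintegral_ofReal_sq_sub_add_two_mul aemeasurable_quantile_cdf
    aemeasurable_quantile_cdf
    (ae_restrict_Ioo_quantile_cdf_nonneg (ae_map_nonneg hF.aemeasurable hF0))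
    (ae_restrict_Ioo_quantile_cdf_nonneg (ae_map_nonneg hG.aemeasurable hG0))
  rw [hsecond hF, hsecond hG] at hquantile
  have hcoupling := lintegral_ofReal_sq_sub_add_two_mul hF.aemeasurable hG.aemeasurable hF0 hG0
  have hcross_ne_top : 2 * ∫⁻ u in Ioo 0 1, ENNReal.ofReal (quantile (cdf (J.map F)) u)
      * ENNReal.ofReal (quantile (cdf (J.map G)) u) ≠ ⊤ :=
    ne_top_of_le_ne_top (ENNReal.add_ne_top.2 ⟨hfin hF, hfin hG⟩) (hquantile ▸ le_add_self)
  -- Both expansions equal the sum of the second moments, so only the cross terms are compared.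
  rw [← ENNReal.pow_le_pow_left_iff two_ne_zero, eLpNorm_two_sq_eq_lintegral,
    eLpNorm_two_sq_eq_lintegral]
  simp only [Pi.sub_apply, Real.norm_eq_abs, sq_abs]
  refine ENNReal.le_of_add_le_add_right hcross_ne_top ?_
  rw [hquantile, ← hcoupling]
  gcongr
  exact lintegral_mul_le_lintegral_quantile_cdf_mul hF.aemeasurable hG.aemeasurable hF0 hG0

end QuantileCoupling

section DistanceQuantile

variable {E : Type*} [NormedAddCommGroup E] [MeasurableSpace E] {P Q : Measure E}

noncomputable def distQuantile (P : Measure E) (x : E) : ℝ → ℝ :=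
  quantile (cdf (P.map fun y => ‖y - x‖))

theorem memLp_norm_sub_const [IsFiniteMeasure P] (hP : MemLp id 2 P) (x : E) :
    MemLp (fun y => ‖y - x‖) 2 P :=
  (hP.sub (memLp_const x)).norm

variable [OpensMeasurableSpace E] [IsProbabilityMeasure P] [IsProbabilityMeasure Q]

theorem measurable_norm_sub_const (x : E) : Measurable fun y : E => ‖y - x‖ :=
  (continuous_id.sub continuous_const).norm.measurable

theorem memLp_distQuantile (hP : MemLp id 2 P) (x : E) :
    MemLp (distQuantile P x) 2 (volume.restrict (Ioo 0 1)) := by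
  have h : MemLp id 2 (P.map fun y => ‖y - x‖) :=
    (memLp_map_measure_iff aestronglyMeasurable_id
      (measurable_norm_sub_const x).aemeasurable).2 (memLp_norm_sub_const hP x)
  have := Measure.isProbabilityMeasure_map (μ := P) (measurable_norm_sub_const x).aemeasurable
  rw [← map_quantile_cdf (μ := P.map fun y => ‖y - x‖)] at h
  exact (memLp_map_measure_iff aestronglyMeasurable_id aemeasurable_quantile_cdf).1 h

theorem eLpNorm_distQuantile_sub_le (hP : MemLp id 2 P) (hQ : MemLp id 2 Q) (x : E)
    {J : Measure (E × E)} (hJP : J.map Prod.fst = P) (hJQ : J.map Prod.snd = Q) :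
    eLpNorm (distQuantile P x - distQuantile Q x) 2 (volume.restrict (Ioo 0 1))
      ≤ eLpNorm (fun p => p.1 - p.2) 2 J := by
  have : IsProbabilityMeasure J := by
    subst hJP
    exact Measure.isProbabilityMeasure_of_map Prod.fst
  have hd := measurable_norm_sub_const x
  have hF : MemLp (fun p : E × E => ‖p.1 - x‖) 2 J :=
    (memLp_map_measure_iff hd.aestronglyMeasurable measurable_fst.aemeasurable).1
      (hJP ▸ memLp_norm_sub_const hP x)
  have hG : MemLp (fun p : E × E => ‖p.2 - x‖) 2 J :=
    (memLp_map_measure_iff hd.aestronglyMeasurable measurable_snd.aemeasurable).1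
      (hJQ ▸ memLp_norm_sub_const hQ x)
  have hmapP : J.map (fun p : E × E => ‖p.1 - x‖) = P.map fun y => ‖y - x‖ := by
    rw [← hJP, Measure.map_map hd measurable_fst]
    rfl
  have hmapQ : J.map (fun p : E × E => ‖p.2 - x‖) = Q.map fun y => ‖y - x‖ := by
    rw [← hJQ, Measure.map_map hd measurable_snd]
    rfl
  have key := eLpNorm_quantile_cdf_map_sub_le hF hG (ae_of_all _ fun _ => norm_nonneg _)
    (ae_of_all _ fun _ => norm_nonneg _)
  rw [hmapP, hmapQ] at key
  refine key.trans (eLpNorm_mono fun p => ?_)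
  simpa [sub_sub_sub_cancel_right] using abs_norm_sub_norm_le (p.1 - x) (p.2 - x)

end DistanceQuantile

section Euclidean

variable {d : ℕ} {P Q : Measure (EuclideanSpace ℝ (Fin d))}
  [IsProbabilityMeasure P] [IsProbabilityMeasure Q]

theorem sqDistCdf_eq_cdf (x : EuclideanSpace ℝ (Fin d)) :
    sqDistCdf P x = cdf (P.map fun y => ‖y - x‖ ^ 2) := by
  have := Measure.isProbabilityMeasure_map (μ := P) (f := fun y => ‖y - x‖ ^ 2) (by fun_prop)
  ext t
  rw [cdf_eq_real, map_measureReal_apply (by fun_prop) measurableSet_Iic]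
  rfl

theorem quantile_sqDistCdf (x : EuclideanSpace ℝ (Fin d)) {u : ℝ} (hu : u ∈ Ioo 0 1) :
    quantile (sqDistCdf P x) u = distQuantile P x u ^ 2 := by
  have hd := measurable_norm_sub_const x
  have := Measure.isProbabilityMeasure_map (μ := P) hd.aemeasurable
  have hmap : P.map (fun y => ‖y - x‖ ^ 2) = (P.map fun y => ‖y - x‖).map (· ^ 2) := by
    rw [Measure.map_map (by fun_prop) hd]
    rfl
  rw [sqDistCdf_eq_cdf, hmap,
    quantile_cdf_map_sq (ae_map_nonneg hd.aemeasurable (ae_of_all _ fun _ => norm_nonneg _)) hu]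
  rfl

theorem dtm_eq_toReal_eLpNorm_div_sqrt {m : ℝ} (hm : m ≤ 1) (x : EuclideanSpace ℝ (Fin d)) :
    dtm P m x = (eLpNorm (distQuantile P x) 2 (volume.restrict (Ioo 0 m))).toReal / √m := by
  have hsub : Ioo 0 m ⊆ Ioo 0 1 := Ioo_subset_Ioo_right hm
  have hmeas : AEStronglyMeasurable (fun u => distQuantile P x u ^ 2)
      (volume.restrict (Ioo 0 m)) :=
    ((aemeasurable_quantile_cdf.mono_measure (Measure.restrict_mono hsub le_rfl)).pow_const
      2).aestronglyMeasurable
  have hint : ∫ u in Ioo 0 m, quantile (sqDistCdf P x) u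
      = (eLpNorm (distQuantile P x) 2 (volume.restrict (Ioo 0 m)) ^ 2).toReal := by
    rw [setIntegral_congr_fun measurableSet_Ioo fun u hu => quantile_sqDistCdf x (hsub hu),
      integral_eq_lintegral_of_nonneg_ae (ae_of_all _ fun _ => sq_nonneg _) hmeas,
      eLpNorm_two_sq_eq_lintegral]
    simp only [Real.norm_eq_abs, sq_abs]
  rw [dtm, dtmSq, hint, ENNReal.toReal_pow, one_div_mul_eq_div, Real.sqrt_div (sq_nonneg _),
    Real.sqrt_sq ENNReal.toReal_nonneg]

theorem W2sq_ne_top (hP : MemLp id 2 P) (hQ : MemLp id 2 Q) : W2sq P Q ≠ ⊤ := by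
  have hcost : MemLp (fun p : _ × _ => p.1 - p.2) 2 (P.prod Q) :=
    (hP.comp_fst Q).sub (hQ.comp_snd P)
  refine ne_top_of_le_ne_top ?_ (iInf_le_of_le (P.prod Q) (iInf_le_of_le (by simp)
    (iInf_le _ (by simp))))
  rw [← eLpNorm_two_sq_eq_lintegral]
  exact ENNReal.pow_ne_top hcost.eLpNorm_ne_top

theorem sq_eLpNorm_distQuantile_sub_le_W2sq (hP : MemLp id 2 P) (hQ : MemLp id 2 Q)
    (x : EuclideanSpace ℝ (Fin d)) :
    eLpNorm (distQuantile P x - distQuantile Q x) 2 (volume.restrict (Ioo 0 1)) ^ 2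
      ≤ W2sq P Q := by
  refine le_iInf fun J => le_iInf fun hJP => le_iInf fun hJQ => ?_
  rw [← eLpNorm_two_sq_eq_lintegral (fun p : _ × _ => p.1 - p.2)]
  gcongr
  exact eLpNorm_distQuantile_sub_le hP hQ x hJP hJQ

theorem toReal_eLpNorm_distQuantile_sub_le_W2 (hP : MemLp id 2 P) (hQ : MemLp id 2 Q)
    (x : EuclideanSpace ℝ (Fin d)) {m : ℝ} (hm : m ≤ 1) :
    (eLpNorm (distQuantile P x - distQuantile Q x) 2 (volume.restrict (Ioo 0 m))).toReal
      ≤ W2 P Q := by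
  have hmono := eLpNorm_mono_measure (distQuantile P x - distQuantile Q x) (p := 2)
    (Measure.restrict_mono (Ioo_subset_Ioo_right hm) le_rfl :
      volume.restrict (Ioo (0 : ℝ) m) ≤ volume.restrict (Ioo 0 1))
  rw [W2, ← Real.sqrt_sq ENNReal.toReal_nonneg, ← ENNReal.toReal_pow]
  exact Real.sqrt_le_sqrt (ENNReal.toReal_mono (W2sq_ne_top hP hQ)
    ((pow_le_pow_left' hmono 2).trans (sq_eLpNorm_distQuantile_sub_le_W2sq hP hQ x)))

end Euclidean

/-- stability of the DTM with respect to the Wasserstein distance: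
`sup_x |δ_{P,m}(x) − δ_{Q,m}(x)| ≤ W₂(P,Q)/√m`. -/
theorem dtm_wasserstein_stability {d : ℕ}
    (P Q : Measure (EuclideanSpace ℝ (Fin d)))
    [IsProbabilityMeasure P] [IsProbabilityMeasure Q]
    (hP : ∫⁻ y, ENNReal.ofReal (‖y‖ ^ 2) ∂P ≠ ⊤)
    (hQ : ∫⁻ y, ENNReal.ofReal (‖y‖ ^ 2) ∂Q ≠ ⊤)
    (m : ℝ) (hm : m ∈ Set.Ioo (0 : ℝ) 1) :
    ∀ x : EuclideanSpace ℝ (Fin d),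
      |dtm P m x - dtm Q m x| ≤ W2 P Q / Real.sqrt m := by
  intro x
  have hP2 : MemLp id 2 P := (memLp_two_iff_lintegral_ofReal_sq_ne_top aestronglyMeasurable_id).2 hP
  have hQ2 : MemLp id 2 Q := (memLp_two_iff_lintegral_ofReal_sq_ne_top aestronglyMeasurable_id).2 hQ
  have hsub : volume.restrict (Ioo (0 : ℝ) m) ≤ volume.restrict (Ioo 0 1) :=
    Measure.restrict_mono (Ioo_subset_Ioo_right hm.2.le) le_rfl
  rw [dtm_eq_toReal_eLpNorm_div_sqrt hm.2.le, dtm_eq_toReal_eLpNorm_div_sqrt hm.2.le, ← sub_div,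
    abs_div, abs_of_pos (Real.sqrt_pos.2 hm.1)]
  gcongr
  exact (abs_toReal_eLpNorm_sub_toReal_eLpNorm_le ((memLp_distQuantile hP2 x).mono_measure hsub)
    ((memLp_distQuantile hQ2 x).mono_measure hsub)).trans
    (toReal_eLpNorm_distQuantile_sub_le_W2 hP2 hQ2 x hm.2.le)
end

section
/- Let P be a probability measure on R^d and X ⊂ R^d a compact set. Suppose that for every x ∈ X, the pushforward of P under y ↦ ||x − y||² is supported on an interval with an a.e. positive density (absolutely continuous component) on that interval. Then the family of quantile functions (F_x^{-1})_{x ∈ X} admits a uniform modulus of continuity: there exists a nondecreasing function ω: (0,1) → R₊ with ω(u) → 0 as u → 0 such that |F_x^{-1}(m') − F_x^{-1}(m)| ≤ ω(|m' − m|) for all x ∈ X and all m, m' ∈ (0,1). -/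
open MeasureTheory Set Filter
open scoped ENNReal Topology

namespace ModAux
set_option linter.unusedSectionVars false

variable (ν : Measure ℝ) [IsProbabilityMeasure ν]

noncomputable def cdf' (t : ℝ) : ℝ := (ν (Iic t)).toReal

lemma cdf'_mono : Monotone (cdf' ν) := fun _ _ hst =>
  ENNReal.toReal_mono (measure_ne_top ν _) (measure_mono (Iic_subset_Iic.mpr hst))

lemma cdf'_add (s t : ℝ) (hst : s ≤ t) :
    cdf' ν t = cdf' ν s + (ν (Ioc s t)).toReal := by
  unfold cdf'
  rw [← ENNReal.toReal_add (measure_ne_top ν _) (measure_ne_top ν _)]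
  congr 1
  rw [← Iic_union_Ioc_eq_Iic hst, measure_union (Iic_disjoint_Ioc le_rfl) measurableSet_Ioc]

section

variable {a b : ℝ} {f : ℝ → ℝ≥0∞} {μs : Measure ℝ}
variable (hf : Measurable f) (heq : ν = volume.withDensity f + μs)
variable (hsupp : ν (Icc a b)ᶜ = 0)
variable (hpos : ∀ᵐ t ∂(volume.restrict (Ioo a b)), 0 < f t)

include hsupp in
lemma cdf'_one {t : ℝ} (hbt : b ≤ t) : cdf' ν t = 1 := by
  have h1 : ν (Iic t) = 1 := by
    refine le_antisymm prob_le_one ?_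
    have h2 : (1 : ℝ≥0∞) = ν univ := (measure_univ (μ := ν)).symm
    rw [h2]
    have hcup : (univ : Set ℝ) ⊆ Iic t ∪ (Icc a b)ᶜ := by
      intro z _
      by_cases hz : z ∈ Icc a b
      · exact Or.inl (le_trans hz.2 hbt)
      · exact Or.inr hz
    calc ν univ ≤ ν (Iic t ∪ (Icc a b)ᶜ) := measure_mono hcup
      _ ≤ ν (Iic t) + ν (Icc a b)ᶜ := measure_union_le _ _
      _ = ν (Iic t) := by rw [hsupp, add_zero]
  rw [cdf', h1, ENNReal.toReal_one]

include hsupp in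
lemma cdf'_zero {t : ℝ} (hta : t < a) : cdf' ν t = 0 := by
  have : ν (Iic t) = 0 :=
    measure_mono_null (fun z hz => fun hzm => absurd hzm.1 (by simp at hz ⊢; linarith)) hsupp
  rw [cdf', this, ENNReal.toReal_zero]

include hsupp in
lemma le_of_cdf'_pos {t : ℝ} (h : 0 < cdf' ν t) : a ≤ t := by
  by_contra hlt
  rw [cdf'_zero ν hsupp (lt_of_not_ge hlt)] at h
  exact lt_irrefl _ h

include hsupp in
lemma lt_of_cdf'_lt_one {t : ℝ} (h : cdf' ν t < 1) : t < b := by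
  by_contra hlt
  rw [cdf'_one ν hsupp (le_of_not_gt hlt)] at h
  exact lt_irrefl _ h

include hf heq in
lemma cdf'_incr {s t u v : ℝ} (hsu : s ≤ u) (huv : u < v) (hvt : v ≤ t) :
    cdf' ν s + ((volume.withDensity f) (Ioo u v)).toReal ≤ cdf' ν t := by
  have hst : s ≤ t := le_trans hsu (le_trans huv.le hvt)
  rw [cdf'_add ν s t hst]
  have h1 : (volume.withDensity f) (Ioo u v) ≤ ν (Ioc s t) := by
    calc (volume.withDensity f) (Ioo u v) ≤ ν (Ioo u v) := by
          rw [heq]; exact Measure.le_add_right le_rfl _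
      _ ≤ ν (Ioc s t) := measure_mono (fun z hz => ⟨lt_of_le_of_lt hsu hz.1, le_trans hz.2.le hvt⟩)
  have := ENNReal.toReal_mono (measure_ne_top ν _) h1
  linarith

include hf heq hpos in
lemma wd_pos {u v : ℝ} (hau : a ≤ u) (huv : u < v) (hvb : v ≤ b) :
    0 < ((volume.withDensity f) (Ioo u v)).toReal := by
  have hsub : Ioo u v ⊆ Ioo a b := Ioo_subset_Ioo hau hvb
  have hne_top : (volume.withDensity f) (Ioo u v) ≠ ∞ := by
    have h1 : (volume.withDensity f) (Ioo u v) ≤ ν (Ioo u v) := by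
      rw [heq]; exact Measure.le_add_right le_rfl _
    exact ne_top_of_le_ne_top (measure_ne_top ν _) h1
  refine ENNReal.toReal_pos ?_ hne_top
  intro h0
  rw [withDensity_apply f measurableSet_Ioo] at h0
  have hz : f =ᵐ[volume.restrict (Ioo u v)] 0 := (lintegral_eq_zero_iff hf).mp h0
  have hp : ∀ᵐ t ∂(volume.restrict (Ioo u v)), 0 < f t :=
    ae_restrict_of_ae_restrict_of_subset hsub hpos
  have hfa : ∀ᵐ t ∂(volume.restrict (Ioo u v)), False := by
    filter_upwards [hz, hp] with t h1 h2
    rw [h1] at h2; exact lt_irrefl _ h2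
  rw [ae_iff] at hfa
  simp only [not_false_eq_true] at hfa
  have hvol : volume.restrict (Ioo u v) (univ : Set ℝ) = 0 := by simpa using hfa
  rw [Measure.restrict_apply_univ, Real.volume_Ioo] at hvol
  have hlt : (0:ℝ) < v - u := by linarith
  simp [ENNReal.ofReal_eq_zero, not_le.mpr hlt] at hvol


-- (B'): uniform positive increment
include hf heq hsupp hpos in
lemma incr_pos (ε : ℝ) (hε : 0 < ε) :
    ∃ δ > 0, ∀ s : ℝ, 0 < cdf' ν s → cdf' ν (s + ε) < 1 →
      δ ≤ cdf' ν (s + ε) - cdf' ν s := by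
  by_cases hba : a + ε < b
  · set st := ε / 4 with hst
    have hstpos : 0 < st := by positivity
    set N := ⌈(b - a) / st⌉₊ with hN
    set J := (Finset.range N).filter (fun j : ℕ => a + ((j:ℝ) + 2) * st < b) with hJ
    have hJne : J.Nonempty := by
      refine ⟨0, Finset.mem_filter.mpr ⟨Finset.mem_range.mpr ?_, by push_cast; nlinarith⟩⟩
      have : 0 < (b - a) / st := div_pos (by linarith) hstpos
      exact Nat.ceil_pos.mpr this
    set c : ℕ → ℝ := fun j =>
      ((volume.withDensity f) (Ioo (a + ((j:ℝ) + 1) * st) (a + ((j:ℝ) + 2) * st))).toReal with hc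
    refine ⟨J.inf' hJne c, ?_, ?_⟩
    · rw [gt_iff_lt, Finset.lt_inf'_iff]
      intro j hj
      have hjb : a + ((j:ℝ) + 2) * st < b := by
        have := (Finset.mem_filter.mp hj).2
        simpa using this
      exact wd_pos ν hf heq hpos (by nlinarith) (by nlinarith) hjb.le
    · intro s hs0 hs1
      have has : a ≤ s := le_of_cdf'_pos ν hsupp hs0
      have hsb : s + ε < b := lt_of_cdf'_lt_one ν hsupp hs1
      set i := ⌊(s - a) / st⌋₊ with hi
      have hi1 : (i:ℝ) * st ≤ s - a := by
        have := Nat.floor_le (div_nonneg (sub_nonneg.mpr has) hstpos.le)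
        calc (i:ℝ) * st ≤ ((s - a)/st) * st := mul_le_mul_of_nonneg_right this hstpos.le
          _ = s - a := by field_simp
      have hi2 : s - a < ((i:ℝ) + 1) * st := by
        have := Nat.lt_floor_add_one ((s - a) / st)
        calc s - a = ((s-a)/st) * st := by field_simp
          _ < ((i:ℝ)+1) * st := by exact mul_lt_mul_of_pos_right this hstpos
      have hiJ : i ∈ J := by
        refine Finset.mem_filter.mpr ⟨Finset.mem_range.mpr ?_, ?_⟩
        · have hNs : (b - a) / st ≤ N := Nat.le_ceil _
          have hlt : (i:ℝ) * st < (N:ℝ) * st := by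
            calc (i:ℝ) * st ≤ s - a := hi1
              _ < b - a := by linarith
              _ ≤ (N:ℝ) * st := by
                  calc b - a = ((b-a)/st) * st := by field_simp
                    _ ≤ (N:ℝ) * st := mul_le_mul_of_nonneg_right hNs hstpos.le
          exact_mod_cast lt_of_mul_lt_mul_right hlt hstpos.le
        · show a + ((i:ℝ) + 2) * st < b
          nlinarith
      refine le_trans (Finset.inf'_le c hiJ) ?_
      have hkey := cdf'_incr ν hf heq
        (s := s) (t := s + ε) (u := a + ((i:ℝ)+1)*st) (v := a + ((i:ℝ)+2)*st)
        (by nlinarith) (by nlinarith) (by nlinarith)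
      simp only [hc]
      linarith
  · exact ⟨1, one_pos, fun s hs0 hs1 => absurd
      (by
        have has : a ≤ s := le_of_cdf'_pos ν hsupp hs0
        have hsb : s + ε < b := lt_of_cdf'_lt_one ν hsupp hs1
        linarith : a + ε < b) hba⟩


include hsupp in
lemma quantile_S_nonempty {m : ℝ} (hm : m < 1) : {t : ℝ | m ≤ cdf' ν t}.Nonempty :=
  ⟨b, by simp [cdf'_one ν hsupp le_rfl, hm.le]⟩

include hsupp in
lemma quantile_S_bdd {m : ℝ} (hm : 0 < m) : BddBelow {t : ℝ | m ≤ cdf' ν t} := by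
  refine ⟨a, fun t ht => ?_⟩
  exact le_of_cdf'_pos ν hsupp (lt_of_lt_of_le hm ht)

include hsupp in
lemma le_cdf'_of_quantile_lt {m t : ℝ} (hm0 : 0 < m) (hm1 : m < 1)
    (h : quantile (cdf' ν) m < t) : m ≤ cdf' ν t := by
  obtain ⟨t', ht', htt⟩ := (csInf_lt_iff (quantile_S_bdd ν hsupp hm0)
    (quantile_S_nonempty ν hsupp hm1)).mp h
  exact le_trans ht' (cdf'_mono ν htt.le)

include hsupp in
lemma cdf'_lt_of_lt_quantile {m t : ℝ} (hm0 : 0 < m)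
    (h : t < quantile (cdf' ν) m) : cdf' ν t < m := by
  by_contra hc
  exact absurd (csInf_le (quantile_S_bdd ν hsupp hm0) (le_of_not_gt hc)) (not_le.mpr h)

lemma quantile_mono' {m m' : ℝ} (hm0 : 0 < m) (hm1 : m' < 1) (hmm : m ≤ m')
    (hsupp : ν (Icc a b)ᶜ = 0) :
    quantile (cdf' ν) m ≤ quantile (cdf' ν) m' := by
  refine csInf_le_csInf (quantile_S_bdd ν hsupp hm0) (quantile_S_nonempty ν hsupp hm1) ?_
  exact fun t ht => le_trans hmm ht

include hf heq hsupp hpos in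
lemma quantile_unif (ε : ℝ) (hε : 0 < ε) :
    ∃ δ > 0, ∀ m ∈ Ioo (0:ℝ) 1, ∀ m' ∈ Ioo (0:ℝ) 1, |m' - m| ≤ δ →
      |quantile (cdf' ν) m' - quantile (cdf' ν) m| ≤ ε := by
  obtain ⟨δ0, hδ0, hB⟩ := incr_pos ν hf heq hsupp hpos (ε/2) (half_pos hε)
  refine ⟨δ0/2, half_pos hδ0, ?_⟩
  have key : ∀ m ∈ Ioo (0:ℝ) 1, ∀ m' ∈ Ioo (0:ℝ) 1, m ≤ m' → m' - m ≤ δ0/2 →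
      quantile (cdf' ν) m' - quantile (cdf' ν) m ≤ ε := by
    intro m hm m' hm' hmm hd
    by_contra hc
    push_neg at hc
    set Qm := quantile (cdf' ν) m with hQm
    set s := Qm + ε/4 with hs
    have hFs : m ≤ cdf' ν s := le_cdf'_of_quantile_lt ν hsupp hm.1 hm.2 (by
      rw [hs]; linarith)
    have hFs2 : cdf' ν (s + ε/2) < m' := by
      refine cdf'_lt_of_lt_quantile ν hsupp hm'.1 ?_
      rw [hs]; linarith
    have hstep := hB s (lt_of_lt_of_le hm.1 hFs) (lt_trans hFs2 hm'.2)
    linarith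
  intro m hm m' hm' hd
  rcases le_total m m' with h | h
  · rw [abs_of_nonneg (by linarith [quantile_mono' ν hm.1 hm'.2 h hsupp])]
    exact key m hm m' hm' h (le_trans (le_abs_self _) hd)
  · rw [abs_of_nonpos (by linarith [quantile_mono' ν hm'.1 hm.2 h hsupp])]
    have : |m' - m| = m - m' := by rw [abs_sub_comm, abs_of_nonneg (by linarith)]
    linarith [key m' hm' m hm h (by linarith [this ▸ hd])]

end
end ModAux

section Main
variable {dim : ℕ} (P : Measure (EuclideanSpace ℝ (Fin dim))) [IsProbabilityMeasure P]

local notation "E" => EuclideanSpace ℝ (Fin dim)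

lemma meas_sm (x : E) : Measurable (fun y : E => ‖x - y‖ ^ 2) := by fun_prop

lemma cdf_eq (x : E) : sqDistCdf P x = ModAux.cdf' (P.map (fun y : E => ‖x - y‖ ^ 2)) := by
  funext t
  rw [sqDistCdf, ModAux.cdf', Measure.map_apply (meas_sm x) measurableSet_Iic]
  congr 2
  ext y
  simp [norm_sub_rev x y]

lemma cdf_apply (x : E) (t : ℝ) :
    ModAux.cdf' (P.map (fun y : E => ‖x - y‖ ^ 2)) t
      = (P ((fun y : E => ‖x - y‖ ^ 2) ⁻¹' Iic t)).toReal := by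
  rw [ModAux.cdf', Measure.map_apply (meas_sm x) measurableSet_Iic]

lemma cdf_neg (x : E) (t : ℝ) (ht : t < 0) : ModAux.cdf' (P.map (fun y : E => ‖x - y‖ ^ 2)) t = 0 := by
  rw [ModAux.cdf', Measure.map_apply (meas_sm x) measurableSet_Iic]
  have : (fun y : E => ‖x - y‖ ^ 2) ⁻¹' (Iic t) = ∅ := by
    ext y; simp only [mem_preimage, mem_Iic, mem_empty_iff_false, iff_false, not_le]
    exact lt_of_lt_of_le ht (by positivity)
  rw [this]; simp

end Main


open Metric

/-- existence of a uniform modulus of continuity for the family of quantile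
functions `(F_x^{-1})_{x ∈ 𝒳}`: if for every `x ∈ 𝒳` the pushforward of `P` by
`y ↦ ‖x − y‖²` is supported on an interval on which its absolutely continuous component
has a.e. positive density, then there is a nondecreasing `ω : (0,1) → ℝ₊` with
`ω(u) → 0` as `u → 0⁺` such that `|F_x^{-1}(m') − F_x^{-1}(m)| ≤ ω(|m' − m|)` for all
`x ∈ 𝒳` and `m, m' ∈ (0,1)`. -/
theorem exists_uniform_modulus_of_continuity {dim : ℕ}
    (P : Measure (EuclideanSpace ℝ (Fin dim))) [IsProbabilityMeasure P]
    (𝒳 : Set (EuclideanSpace ℝ (Fin dim))) (h𝒳 : IsCompact 𝒳)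
    (hpush : ∀ x ∈ 𝒳, ∃ (a b : ℝ) (f : ℝ → ℝ≥0∞) (μs : Measure ℝ),
      a ≤ b ∧ Measurable f ∧
      Measure.map (fun y => ‖x - y‖ ^ 2) P = volume.withDensity f + μs ∧
      (Measure.map (fun y => ‖x - y‖ ^ 2) P) (Set.Icc a b)ᶜ = 0 ∧
      (∀ᵐ t ∂(volume.restrict (Set.Ioo a b)), 0 < f t)) :
    ∃ ω : ℝ → ℝ, Monotone ω ∧ (∀ u, 0 ≤ ω u) ∧
      Tendsto ω (𝓝[>] (0 : ℝ)) (𝓝 0) ∧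
      ∀ x ∈ 𝒳, ∀ m ∈ Set.Ioo (0 : ℝ) 1, ∀ m' ∈ Set.Ioo (0 : ℝ) 1,
        |quantile (sqDistCdf P x) m' - quantile (sqDistCdf P x) m| ≤ ω |m' - m| := by

  classical
  have hcdf : ∀ x : EuclideanSpace ℝ (Fin dim), sqDistCdf P x
      = ModAux.cdf' (P.map (fun y => ‖x - y‖ ^ 2)) := cdf_eq P
  simp only [hcdf]
  rcases eq_empty_or_nonempty 𝒳 with hXe | ⟨x₀, hx₀⟩
  · exact ⟨fun _ => 0, monotone_const, fun _ => le_rfl, tendsto_const_nhds, by simp [hXe]⟩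
  set ν : EuclideanSpace ℝ (Fin dim) → Measure ℝ :=
    fun x => P.map (fun y => ‖x - y‖ ^ 2) with hν
  have hprob : ∀ x, IsProbabilityMeasure (ν x) :=
    fun x => Measure.isProbabilityMeasure_map (meas_sm x).aemeasurable
  set Q : EuclideanSpace ℝ (Fin dim) → ℝ → ℝ :=
    fun x => quantile (ModAux.cdf' (ν x)) with hQ
  obtain ⟨a₀, b₀, f₀, μ₀, hab₀, hf₀, heq₀, hsupp₀, hpos₀⟩ := hpush x₀ hx₀
  obtain ⟨r, hr⟩ := h𝒳.isBounded.subset_closedBall x₀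
  set R := max r 0 with hRdef
  have hR : 0 ≤ R := le_max_right _ _
  have hrR : 𝒳 ⊆ closedBall x₀ R :=
    hr.trans (closedBall_subset_closedBall (le_max_left _ _))
  set sb := Real.sqrt (max b₀ 0) with hsbdef
  have hsb : 0 ≤ sb := Real.sqrt_nonneg _
  set SB := sb + R with hSBdef
  have hSB0 : 0 ≤ SB := by positivity
  set B := SB ^ 2 with hBdef
  have hB0 : 0 ≤ B := sq_nonneg _
  have h1 : ν x₀ (Iic b₀) = 1 := by
    haveI := hprob x₀
    have h2 := ModAux.cdf'_one (ν x₀) (a := a₀) hsupp₀ le_rfl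
    rwa [ModAux.cdf', ENNReal.toReal_eq_one_iff] at h2
  -- uniform full-measure bound
  have hkey : ∀ x ∈ 𝒳, ∀ y : EuclideanSpace ℝ (Fin dim),
      ‖x₀ - y‖ ^ 2 ≤ b₀ → ‖x - y‖ ^ 2 ≤ B := by
    intro x hx y hy
    have h2 : ‖x₀ - y‖ ≤ sb := by
      have h3 : ‖x₀ - y‖ ^ 2 ≤ max b₀ 0 := le_trans hy (le_max_left _ _)
      have h4 := Real.sqrt_le_sqrt h3
      rwa [Real.sqrt_sq (norm_nonneg _)] at h4
    have hxx₀ : ‖x - x₀‖ ≤ R := by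
      have := hrR hx
      rwa [mem_closedBall, dist_eq_norm] at this
    have h3 : ‖x - y‖ ≤ SB := by
      calc ‖x - y‖ = ‖(x - x₀) + (x₀ - y)‖ := by rw [sub_add_sub_cancel]
        _ ≤ ‖x - x₀‖ + ‖x₀ - y‖ := norm_add_le _ _
        _ ≤ R + sb := add_le_add hxx₀ h2
        _ = SB := by rw [hSBdef]; ring
    nlinarith [norm_nonneg (x - y)]
  have hFB : ∀ x ∈ 𝒳, ModAux.cdf' (ν x) B = 1 := by
    intro x hx
    haveI := hprob x
    rw [cdf_apply]
    rw [ENNReal.toReal_eq_one_iff]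
    refine le_antisymm prob_le_one ?_
    have hsub : (fun y => ‖x₀ - y‖ ^ 2) ⁻¹' (Iic b₀)
        ⊆ (fun y : EuclideanSpace ℝ (Fin dim) => ‖x - y‖ ^ 2) ⁻¹' (Iic B) := by
      intro y hy
      exact hkey x hx y hy
    have h2 : P ((fun y => ‖x₀ - y‖ ^ 2) ⁻¹' (Iic b₀)) = 1 := by
      rw [← Measure.map_apply (meas_sm x₀) measurableSet_Iic]
      exact h1
    calc (1 : ℝ≥0∞) = P ((fun y => ‖x₀ - y‖ ^ 2) ⁻¹' (Iic b₀)) := h2.symm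
      _ ≤ P ((fun y : EuclideanSpace ℝ (Fin dim) => ‖x - y‖ ^ 2) ⁻¹' (Iic B)) :=
          measure_mono hsub
  have hSne : ∀ x ∈ 𝒳, ∀ m : ℝ, m < 1 → B ∈ {t : ℝ | m ≤ ModAux.cdf' (ν x) t} := by
    intro x hx m hm
    rw [mem_setOf_eq, hFB x hx]
    exact hm.le
  have hSbdd : ∀ x : EuclideanSpace ℝ (Fin dim), ∀ m : ℝ, 0 < m →
      BddBelow {t : ℝ | m ≤ ModAux.cdf' (ν x) t} := by
    intro x m hm
    refine ⟨0, fun t ht => ?_⟩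
    by_contra hlt
    rw [mem_setOf_eq, cdf_neg P x t (lt_of_not_ge hlt)] at ht
    exact absurd (lt_of_lt_of_le hm ht) (lt_irrefl 0)
  have hQle : ∀ x ∈ 𝒳, ∀ m ∈ Ioo (0:ℝ) 1, Q x m ≤ B := by
    intro x hx m hm
    exact csInf_le (hSbdd x m hm.1) (hSne x hx m hm.2)
  have hQge : ∀ x ∈ 𝒳, ∀ m ∈ Ioo (0:ℝ) 1, 0 ≤ Q x m := by
    intro x hx m hm
    refine le_csInf ⟨B, hSne x hx m hm.2⟩ (fun t ht => ?_)
    by_contra hlt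
    rw [mem_setOf_eq, cdf_neg P x t (lt_of_not_ge hlt)] at ht
    exact absurd (lt_of_lt_of_le hm.1 ht) (lt_irrefl 0)
  set K := 2 * (SB + 1) + 2 * R with hKdef
  have hK0 : 0 ≤ K := by positivity
  clear_value K
  have hLip : ∀ x ∈ 𝒳, ∀ x' ∈ 𝒳, ∀ m ∈ Ioo (0:ℝ) 1,
      Q x' m ≤ Q x m + K * ‖x - x'‖ := by
    intro x hx x' hx' m hm
    set d := ‖x - x'‖ with hd
    have hd0 : 0 ≤ d := norm_nonneg _
    have hd2R : d ≤ 2 * R := by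
      have hc1 := hrR hx
      have hc2 := hrR hx'
      rw [mem_closedBall] at hc1 hc2
      calc d = dist x x' := (dist_eq_norm _ _).symm
        _ ≤ dist x x₀ + dist x₀ x' := dist_triangle _ _ _
        _ ≤ R + R := add_le_add hc1 (by rwa [dist_comm] at hc2)
        _ = 2 * R := by ring
    refine le_of_forall_pos_le_add ?_
    intro η hη
    set η' := min η 1 with hη'def
    have hη' : 0 < η' := lt_min hη one_pos
    have hne : {t : ℝ | m ≤ ModAux.cdf' (ν x) t}.Nonempty := ⟨B, hSne x hx m hm.2⟩
    have hQlt : Q x m < Q x m + η' := lt_add_of_pos_right _ hη'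
    obtain ⟨t, ht, htlt⟩ := exists_lt_of_csInf_lt hne hQlt
    have ht0 : 0 ≤ t := by
      by_contra hlt
      rw [mem_setOf_eq, cdf_neg P x t (lt_of_not_ge hlt)] at ht
      exact absurd (lt_of_lt_of_le hm.1 ht) (lt_irrefl 0)
    have htB : t ≤ B + 1 := by
      have hb1 := hQle x hx m hm
      have hb2 : η' ≤ 1 := min_le_right _ _
      linarith
    have hsub : (fun y : EuclideanSpace ℝ (Fin dim) => ‖x - y‖ ^ 2) ⁻¹' Iic t
        ⊆ (fun y : EuclideanSpace ℝ (Fin dim) => ‖x' - y‖ ^ 2) ⁻¹' Iic (t + K * d) := by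
      intro y hy
      simp only [mem_preimage, mem_Iic] at hy ⊢
      have h1 : ‖x - y‖ ≤ Real.sqrt t := by
        have h5 := Real.sqrt_le_sqrt hy
        rwa [Real.sqrt_sq (norm_nonneg _)] at h5
      have h2 : Real.sqrt t ≤ SB + 1 := by
        rw [show SB + 1 = Real.sqrt ((SB + 1) ^ 2) from (Real.sqrt_sq (by positivity)).symm]
        exact Real.sqrt_le_sqrt (by nlinarith)
      have h3 : ‖x' - y‖ ≤ d + ‖x - y‖ := by
        calc ‖x' - y‖ = ‖(x' - x) + (x - y)‖ := by rw [sub_add_sub_cancel]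
          _ ≤ ‖x' - x‖ + ‖x - y‖ := norm_add_le _ _
          _ = d + ‖x - y‖ := by rw [norm_sub_rev]
      have h4 : 0 ≤ ‖x - y‖ := norm_nonneg _
      have h5 : Real.sqrt t ^ 2 = t := Real.sq_sqrt ht0
      have h6 : 0 ≤ Real.sqrt t := Real.sqrt_nonneg _
      nlinarith [norm_nonneg (x' - y)]
    have hm2 : m ≤ ModAux.cdf' (ν x') (t + K * d) := by
      rw [cdf_apply]
      rw [mem_setOf_eq, cdf_apply] at ht
      refine le_trans ht ?_
      exact ENNReal.toReal_mono (measure_ne_top P _) (measure_mono hsub)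
    have hfin : Q x' m ≤ t + K * d := csInf_le (hSbdd x' m hm.1) hm2
    have : η' ≤ η := min_le_left _ _
    linarith
  -- uniform equicontinuity
  have star : ∀ ε > 0, ∃ δ > 0, ∀ x ∈ 𝒳, ∀ m ∈ Ioo (0:ℝ) 1, ∀ m' ∈ Ioo (0:ℝ) 1,
      |m' - m| ≤ δ → |Q x m' - Q x m| ≤ ε := by
    intro ε hε
    have H : ∀ z : EuclideanSpace ℝ (Fin dim), ∃ δ, 0 < δ ∧ (z ∈ 𝒳 →
        ∀ m ∈ Ioo (0:ℝ) 1, ∀ m' ∈ Ioo (0:ℝ) 1,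
          |m' - m| ≤ δ → |Q z m' - Q z m| ≤ ε / 2) := by
      intro z
      by_cases hz : z ∈ 𝒳
      · obtain ⟨a, b, f, μs, hab, hf, heq, hsupp, hpos⟩ := hpush z hz
        haveI := hprob z
        obtain ⟨δ, hδ, hp⟩ := ModAux.quantile_unif (ν z) hf heq hsupp hpos (ε/2) (half_pos hε)
        exact ⟨δ, hδ, fun _ => hp⟩
      · exact ⟨1, one_pos, fun h => absurd h hz⟩
    choose δf hδf hδfp using H
    set rr := ε / (4 * (K + 1)) with hrrdef
    have hK1 : 0 < K + 1 := by linarith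
    have hrr : 0 < rr := by positivity
    clear_value rr
    obtain ⟨T, hT𝒳, hTcov⟩ := h𝒳.elim_nhds_subcover (fun z => ball z rr)
      (fun z _ => ball_mem_nhds z hrr)
    have hTne : T.Nonempty := by
      obtain ⟨z, hz⟩ := mem_iUnion₂.mp (hTcov hx₀)
      exact ⟨z, hz.1⟩
    refine ⟨T.inf' hTne δf, ?_, ?_⟩
    · rw [gt_iff_lt, Finset.lt_inf'_iff]
      exact fun z _ => hδf z
    · intro x hx m hm m' hm' hdist
      obtain ⟨z, hzT, hxz⟩ := mem_iUnion₂.mp (hTcov hx)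
      have hz𝒳 : z ∈ 𝒳 := hT𝒳 z hzT
      have hxz' : ‖z - x‖ < rr := by
        rw [← dist_eq_norm, dist_comm]
        exact mem_ball.mp hxz
      have hL1 : ∀ u ∈ Ioo (0:ℝ) 1, |Q x u - Q z u| ≤ K * ‖z - x‖ := by
        intro u hu
        have hl1 := hLip z hz𝒳 x hx u hu
        have hl2 := hLip x hx z hz𝒳 u hu
        rw [norm_sub_rev] at hl2
        exact abs_le.mpr ⟨by linarith, by linarith⟩
      have hmain := hδfp z hz𝒳 m hm m' hm'
        (le_trans hdist (Finset.inf'_le δf hzT))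
      obtain ⟨e1, e2⟩ := abs_le.mp hmain
      obtain ⟨f1, f2⟩ := abs_le.mp (hL1 m' hm')
      obtain ⟨g1, g2⟩ := abs_le.mp (hL1 m hm)
      have hKr : K * ‖z - x‖ ≤ ε / 4 := by
        have hm1 : K * ‖z - x‖ ≤ K * rr :=
          mul_le_mul_of_nonneg_left hxz'.le hK0
        have hm2 : K * rr ≤ (K + 1) * rr :=
          mul_le_mul_of_nonneg_right (by linarith) hrr.le
        have hm3 : (K + 1) * rr = ε / 4 := by
          rw [hrrdef]; field_simp
        exact le_trans hm1 (le_trans hm2 (le_of_eq hm3))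
      exact abs_le.mpr ⟨by linarith, by linarith⟩
  -- build the modulus
  set S : ℝ → Set ℝ := fun u => {v | v = 0 ∨ ∃ x ∈ 𝒳, ∃ m ∈ Ioo (0:ℝ) 1,
    ∃ m' ∈ Ioo (0:ℝ) 1, |m' - m| ≤ u ∧ v = |Q x m' - Q x m|} with hSdef
  have hS0 : ∀ u, (0:ℝ) ∈ S u := fun u => Or.inl rfl
  have hSBdd : ∀ u, BddAbove (S u) := by
    intro u
    refine ⟨B, ?_⟩
    rintro v (rfl | ⟨x, hx, m, hm, m', hm', _, rfl⟩)
    · exact hB0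
    · have q1 := hQle x hx m hm
      have q2 := hQge x hx m hm
      have q3 := hQle x hx m' hm'
      have q4 := hQge x hx m' hm'
      exact abs_le.mpr ⟨by linarith, by linarith⟩
  set ω : ℝ → ℝ := fun u => sSup (S u) with hωdef
  have hωnn : ∀ u, 0 ≤ ω u := fun u => le_csSup (hSBdd u) (hS0 u)
  refine ⟨ω, ?_, hωnn, ?_, ?_⟩
  · intro u u' huu
    refine csSup_le_csSup (hSBdd u') ⟨0, hS0 u⟩ ?_
    rintro v (rfl | ⟨x, hx, m, hm, m', hm', hd, rfl⟩)
    · exact hS0 u'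
    · exact Or.inr ⟨x, hx, m, hm, m', hm', hd.trans huu, rfl⟩
  · refine Metric.tendsto_nhds.mpr ?_
    intro ε hε
    obtain ⟨δ, hδ, hstar⟩ := star (ε/2) (half_pos hε)
    filter_upwards [Ioc_mem_nhdsGT_of_mem ⟨le_refl (0:ℝ), hδ⟩] with u hu
    have hle : ω u ≤ ε / 2 := by
      refine csSup_le ⟨0, hS0 u⟩ ?_
      rintro v (rfl | ⟨x, hx, m, hm, m', hm', hd, rfl⟩)
      · linarith
      · exact hstar x hx m hm m' hm' (le_trans hd hu.2)
    rw [Real.dist_eq, sub_zero, abs_of_nonneg (hωnn u)]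
    linarith
  · intro x hx m hm m' hm'
    exact le_csSup (hSBdd _) (Or.inr ⟨x, hx, m, hm, m', hm', le_refl _, rfl⟩)
end

section
/- Let P be a probability measure with compact support S ⊂ R^d, fix m ∈ (0,1) and x ∈ R^d, and define f_x(y) = min( F_x^{-1}(m) − ||x − y||², 0 ). Then for any compact X ⊂ R^d and any x, x' ∈ X, y in the support of P: |f_x(y) − f_{x'}(y)| ≤ 2 ( r(X) + ||y|| + √(q_{P,X}(m)) ) ||x − x'||, where r(X) is the radius of the smallest origin-centered ball containing X and q_{P,X}(m) = sup_{x∈X} F_x^{-1}(m). In particular, the family (f_x)_{x ∈ X} is uniformly Lipschitz in x on bounded sets of y. -/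
open MeasureTheory Set

/-- Radius of the smallest closed ball centered at the origin containing `K`. -/
noncomputable def radius {d : ℕ} (K : Set (EuclideanSpace ℝ (Fin d))) : ℝ :=
  sInf {r : ℝ | 0 < r ∧ K ⊆ Metric.closedBall 0 r}

/-- The function `f_x(y) = min(F_x^{-1}(m) − ‖x − y‖², 0)` appearing in the Donsker-class
argument for the DTM. -/
noncomputable def fFun {d : ℕ} (P : Measure (EuclideanSpace ℝ (Fin d))) (m : ℝ)
    (x y : EuclideanSpace ℝ (Fin d)) : ℝ :=
  min (quantile (sqDistCdf P x) m - ‖x - y‖ ^ 2) 0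

lemma mem_nonneg {d : ℕ} (P : Measure (EuclideanSpace ℝ (Fin d)))
    (x : EuclideanSpace ℝ (Fin d)) {m t : ℝ} (hm : 0 < m) (ht : m ≤ sqDistCdf P x t) :
    0 ≤ t := by
  by_contra h
  push_neg at h
  have he : {y : EuclideanSpace ℝ (Fin d) | ‖y - x‖ ^ 2 ≤ t} = ∅ := by
    ext y; simp only [mem_setOf_eq, mem_empty_iff_false, iff_false, not_le]
    exact lt_of_lt_of_le h (sq_nonneg _)
  rw [sqDistCdf, he] at ht
  simp at ht
  linarith

lemma bddBelow_qset {d : ℕ} (P : Measure (EuclideanSpace ℝ (Fin d)))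
    (x : EuclideanSpace ℝ (Fin d)) {m : ℝ} (hm : 0 < m) :
    BddBelow {t : ℝ | m ≤ sqDistCdf P x t} :=
  ⟨0, fun t ht => mem_nonneg P x hm ht⟩

lemma nonempty_qset {d : ℕ} (P : Measure (EuclideanSpace ℝ (Fin d))) [IsProbabilityMeasure P]
    {S : Set (EuclideanSpace ℝ (Fin d))} (hS : IsCompact S) (hsupp : P Sᶜ = 0)
    {m : ℝ} (hm1 : m ≤ 1) (x : EuclideanSpace ℝ (Fin d)) :
    {t : ℝ | m ≤ sqDistCdf P x t}.Nonempty := by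
  obtain ⟨R, hR⟩ := hS.isBounded.subset_closedBall 0
  refine ⟨(R + ‖x‖)^2, ?_⟩
  have hPS : P S = 1 := (prob_compl_eq_zero_iff hS.measurableSet).mp hsupp
  have hsub : S ⊆ {y : EuclideanSpace ℝ (Fin d) | ‖y - x‖ ^ 2 ≤ (R + ‖x‖)^2} := by
    intro y hyS
    have hy : ‖y‖ ≤ R := by simpa using hR hyS
    have h1 : ‖y - x‖ ≤ R + ‖x‖ := (norm_sub_le y x).trans (by linarith)
    exact sq_le_sq' (by nlinarith [norm_nonneg (y - x)]) h1
  have h1 : P {y : EuclideanSpace ℝ (Fin d) | ‖y - x‖ ^ 2 ≤ (R + ‖x‖)^2} = 1 :=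
    le_antisymm prob_le_one (hPS ▸ measure_mono hsub)
  simp only [mem_setOf_eq, sqDistCdf, h1]
  simpa using hm1

lemma quantile_nonneg' {d : ℕ} (P : Measure (EuclideanSpace ℝ (Fin d)))
    (x : EuclideanSpace ℝ (Fin d)) {m : ℝ} (hm : 0 < m) :
    0 ≤ quantile (sqDistCdf P x) m :=
  Real.sInf_nonneg (fun _ ht => mem_nonneg P x hm ht)

open Filter Topology in
lemma quantile_sq_le {d : ℕ} (P : Measure (EuclideanSpace ℝ (Fin d))) [IsProbabilityMeasure P]
    {S : Set (EuclideanSpace ℝ (Fin d))} (hS : IsCompact S) (hsupp : P Sᶜ = 0)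
    {m : ℝ} (hm : m ∈ Set.Ioo (0:ℝ) 1) (x x' : EuclideanSpace ℝ (Fin d)) :
    quantile (sqDistCdf P x) m
      ≤ (Real.sqrt (quantile (sqDistCdf P x') m) + ‖x - x'‖)^2 := by
  set q' := quantile (sqDistCdf P x') m with hq'
  set ε := ‖x - x'‖ with hε
  have hεnn : 0 ≤ ε := norm_nonneg _
  have hq'nn : 0 ≤ q' := quantile_nonneg' P x' hm.1
  have key : ∀ δ ∈ Set.Ioi (0:ℝ),
      quantile (sqDistCdf P x) m ≤ (Real.sqrt (q' + δ) + ε)^2 := by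
    intro δ hδ
    rw [Set.mem_Ioi] at hδ
    have hne := nonempty_qset P hS hsupp hm.2.le x'
    have hlt : sInf {t : ℝ | m ≤ sqDistCdf P x' t} < q' + δ := by
      have heq : sInf {t : ℝ | m ≤ sqDistCdf P x' t} = q' := rfl
      rw [heq]; linarith
    obtain ⟨t, ht, htlt⟩ := exists_lt_of_csInf_lt hne hlt
    have htnn : 0 ≤ t := mem_nonneg P x' hm.1 ht
    have hsub : {y : EuclideanSpace ℝ (Fin d) | ‖y - x'‖ ^ 2 ≤ t}
        ⊆ {y : EuclideanSpace ℝ (Fin d) | ‖y - x‖ ^ 2 ≤ (Real.sqrt t + ε)^2} := by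
      intro y hy
      simp only [mem_setOf_eq] at hy ⊢
      have h1 : ‖y - x'‖ ≤ Real.sqrt t := (Real.le_sqrt (norm_nonneg _) htnn).mpr hy
      have h2 : ‖y - x‖ ≤ Real.sqrt t + ε := by
        have h3 : ‖y - x‖ ≤ ‖y - x'‖ + ‖x' - x‖ := by
          simpa [dist_eq_norm] using dist_triangle y x' x
        have h4 : ‖x' - x‖ = ε := by rw [hε, norm_sub_rev]
        linarith
      exact pow_le_pow_left₀ (norm_nonneg _) h2 2
    have hmem : m ≤ sqDistCdf P x ((Real.sqrt t + ε)^2) := by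
      calc m ≤ sqDistCdf P x' t := ht
        _ ≤ sqDistCdf P x ((Real.sqrt t + ε)^2) :=
          ENNReal.toReal_mono (measure_ne_top P _) (measure_mono hsub)
    have hqle : quantile (sqDistCdf P x) m ≤ (Real.sqrt t + ε)^2 :=
      csInf_le (bddBelow_qset P x hm.1) hmem
    refine hqle.trans ?_
    have hst : Real.sqrt t ≤ Real.sqrt (q' + δ) := Real.sqrt_le_sqrt (by linarith)
    exact pow_le_pow_left₀ (by positivity) (by linarith) 2
  have htend : Tendsto (fun δ : ℝ => (Real.sqrt (q' + δ) + ε)^2) (𝓝[>] (0:ℝ))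
      (𝓝 ((Real.sqrt q' + ε)^2)) := by
    have hc : Continuous (fun δ : ℝ => (Real.sqrt (q' + δ) + ε)^2) := by
      continuity
    have := hc.tendsto 0
    simp only [add_zero] at this
    exact this.mono_left nhdsWithin_le_nhds
  exact ge_of_tendsto htend (eventually_nhdsWithin_of_forall key)
lemma min_zero_lip (u v : ℝ) : |min u 0 - min v 0| ≤ |u - v| := by
  have h1 := le_abs_self (u - v)
  have h2 := neg_abs_le (u - v)
  rcases le_total u 0 with hu|hu <;> rcases le_total v 0 with hv|hv <;>
    simp only [min_eq_left, min_eq_right, hu, hv] <;> rw [abs_le] <;>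
    constructor <;> simp_all [min_def] <;> first | linarith | (split_ifs <;> linarith)

lemma norm_le_radius {d : ℕ} {K : Set (EuclideanSpace ℝ (Fin d))} (hK : IsCompact K)
    {x : EuclideanSpace ℝ (Fin d)} (hx : x ∈ K) : ‖x‖ ≤ radius K := by
  obtain ⟨R, hR⟩ := hK.isBounded.subset_closedBall 0
  have hne : {r : ℝ | 0 < r ∧ K ⊆ Metric.closedBall 0 r}.Nonempty := by
    refine ⟨max R 1, lt_of_lt_of_le one_pos (le_max_right _ _), ?_⟩
    exact hR.trans (Metric.closedBall_subset_closedBall (le_max_left _ _))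
  refine le_csInf hne ?_
  rintro r ⟨-, hr⟩
  simpa [dist_zero_right] using Metric.mem_closedBall.mp (hr hx)


/-- the family `(f_x)_{x ∈ 𝒳}` is Lipschitz in `x`:
`|f_x(y) − f_{x'}(y)| ≤ 2 (r(𝒳) + ‖y‖ + √(q_{P,𝒳}(m))) ‖x − x'‖` for `x, x' ∈ 𝒳` and
`y` in the (compact) support of `P`, where
`q_{P,𝒳}(m) = sup_{x ∈ 𝒳} F_x^{-1}(m)`. -/
theorem fFun_lipschitz {d : ℕ}
    (P : Measure (EuclideanSpace ℝ (Fin d))) [IsProbabilityMeasure P]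
    (S : Set (EuclideanSpace ℝ (Fin d))) (hS : IsCompact S) (hsupp : P Sᶜ = 0)
    (m : ℝ) (hm : m ∈ Set.Ioo (0 : ℝ) 1)
    (𝒳 : Set (EuclideanSpace ℝ (Fin d))) (h𝒳 : IsCompact 𝒳)
    (x : EuclideanSpace ℝ (Fin d)) (hx : x ∈ 𝒳)
    (x' : EuclideanSpace ℝ (Fin d)) (hx' : x' ∈ 𝒳)
    (y : EuclideanSpace ℝ (Fin d)) (hy : y ∈ S) :
    |fFun P m x y - fFun P m x' y|
      ≤ 2 * (radius 𝒳 + ‖y‖ +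
            Real.sqrt (sSup ((fun z => quantile (sqDistCdf P z) m) '' 𝒳))) *
          ‖x - x'‖ := by
  set ε := ‖x - x'‖ with hε
  have hεnn : 0 ≤ ε := norm_nonneg _
  set qx := quantile (sqDistCdf P x) m with hqx
  set qx' := quantile (sqDistCdf P x') m with hqx'
  set Q := sSup ((fun z => quantile (sqDistCdf P z) m) '' 𝒳) with hQ
  set r := radius 𝒳 with hr
  have hxr : ‖x‖ ≤ r := norm_le_radius h𝒳 hx
  have hx'r : ‖x'‖ ≤ r := norm_le_radius h𝒳 hx'
  have hqxnn : 0 ≤ qx := quantile_nonneg' P x hm.1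
  have hqx'nn : 0 ≤ qx' := quantile_nonneg' P x' hm.1
  -- bddAbove of the image
  have hbdd : BddAbove ((fun z => quantile (sqDistCdf P z) m) '' 𝒳) := by
    obtain ⟨R, hR⟩ := h𝒳.isBounded.subset_closedBall 0
    refine ⟨(Real.sqrt qx + (R + ‖x‖))^2, ?_⟩
    rintro q ⟨z, hz, rfl⟩
    have hzR : ‖z‖ ≤ R := by simpa [dist_zero_right] using hR hz
    have hkey := quantile_sq_le P hS hsupp hm z x
    refine hkey.trans ?_
    have h1 : ‖z - x‖ ≤ R + ‖x‖ := (norm_sub_le z x).trans (by linarith)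
    exact pow_le_pow_left₀ (by positivity) (by linarith) 2
  have hqxQ : qx ≤ Q := le_csSup hbdd ⟨x, hx, rfl⟩
  have hqx'Q : qx' ≤ Q := le_csSup hbdd ⟨x', hx', rfl⟩
  have hsqxQ : Real.sqrt qx ≤ Real.sqrt Q := Real.sqrt_le_sqrt hqxQ
  have hsqx'Q : Real.sqrt qx' ≤ Real.sqrt Q := Real.sqrt_le_sqrt hqx'Q
  -- sqrt quantile lipschitz
  have hk1 : Real.sqrt qx ≤ Real.sqrt qx' + ε := by
    have := Real.sqrt_le_sqrt (quantile_sq_le P hS hsupp hm x x')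
    rwa [Real.sqrt_sq (by positivity)] at this
  have hk2 : Real.sqrt qx' ≤ Real.sqrt qx + ε := by
    have := Real.sqrt_le_sqrt (quantile_sq_le P hS hsupp hm x' x)
    rw [Real.sqrt_sq (by positivity), norm_sub_rev] at this
    exact this
  have hsqx := Real.sq_sqrt hqxnn
  have hsqx' := Real.sq_sqrt hqx'nn
  have hsnn := Real.sqrt_nonneg qx
  have hsnn' := Real.sqrt_nonneg qx'
  -- quantile difference bound
  have hqdiff : |qx - qx'| ≤ 2 * Real.sqrt Q * ε := by
    rw [abs_le]
    constructor <;> nlinarith [mul_nonneg hεnn (add_nonneg hsnn hsnn')]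
  -- norm difference bound
  have hndiff : |‖x - y‖^2 - ‖x' - y‖^2| ≤ 2 * (r + ‖y‖) * ε := by
    have h1 : |‖x - y‖ - ‖x' - y‖| ≤ ε := by
      have := abs_norm_sub_norm_le (x - y) (x' - y)
      rwa [show (x - y) - (x' - y) = x - x' by abel] at this
    have h2 : ‖x - y‖ ≤ r + ‖y‖ := (norm_sub_le x y).trans (by linarith)
    have h3 : ‖x' - y‖ ≤ r + ‖y‖ := (norm_sub_le x' y).trans (by linarith)
    have h4 := norm_nonneg (x - y)
    have h5 := norm_nonneg (x' - y)
    rw [abs_le] at h1 ⊢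
    constructor <;> nlinarith
  -- assemble
  have hmin : |fFun P m x y - fFun P m x' y|
      ≤ |(qx - ‖x - y‖^2) - (qx' - ‖x' - y‖^2)| := min_zero_lip _ _
  calc |fFun P m x y - fFun P m x' y|
      ≤ |(qx - ‖x - y‖^2) - (qx' - ‖x' - y‖^2)| := hmin
    _ = |(qx - qx') - (‖x - y‖^2 - ‖x' - y‖^2)| := by ring_nf
    _ ≤ |qx - qx'| + |‖x - y‖^2 - ‖x' - y‖^2| := abs_sub _ _
    _ ≤ 2 * Real.sqrt Q * ε + 2 * (r + ‖y‖) * ε := add_le_add hqdiff hndiff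
    _ = 2 * (r + ‖y‖ + Real.sqrt Q) * ε := by ring
end

section
/- Let p and q be Morse functions on a compact manifold, p with finitely many critical points c_1, …, c_k having pairwise distinct critical values, and q with critical points c_1', …, c_k' (matched indexwise). Let D_p, D_q be the persistence diagrams of the upper-level-set filtrations of p and q. Set a = min_{i≠j} |p(c_i) − p(c_j)| and b = max_j |p(c_j) − q(c_j')|. If b ≤ a/2 − ||p−q||_∞ and a/2 > 2||p−q||_∞, then the bottleneck distance satisfies W_∞(D_p, D_q) = b. -/
open Set

/-- ℓ∞ distance between points of the plane. -/
noncomputable def linfDist (z w : ℝ × ℝ) : ℝ := max |z.1 - w.1| |z.2 - w.2|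

/-- ℓ∞ distance of a diagram point to the diagonal. -/
noncomputable def diagDist (z : ℝ × ℝ) : ℝ := |z.1 - z.2| / 2

/-- An `ε`-matching between two (finite) persistence diagrams: a partial bijection whose
matched pairs are within ℓ∞ distance `ε` and whose unmatched points are within distance `ε`
of the diagonal. -/
def IsMatching (D₁ D₂ : Finset (ℝ × ℝ)) (ε : ℝ) : Prop :=
  ∃ M : Finset ((ℝ × ℝ) × (ℝ × ℝ)),
    (∀ p ∈ M, p.1 ∈ D₁ ∧ p.2 ∈ D₂ ∧ linfDist p.1 p.2 ≤ ε) ∧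
    (∀ p ∈ M, ∀ q ∈ M, (p.1 = q.1 ↔ p.2 = q.2)) ∧
    (∀ z ∈ D₁, (∀ p ∈ M, p.1 ≠ z) → diagDist z ≤ ε) ∧
    (∀ w ∈ D₂, (∀ p ∈ M, p.2 ≠ w) → diagDist w ≤ ε)

/-- The bottleneck distance between two finite persistence diagrams (points may be matched
to the diagonal). -/
noncomputable def bottleneck (D₁ D₂ : Finset (ℝ × ℝ)) : ℝ :=
  sInf {ε : ℝ | 0 ≤ ε ∧ IsMatching D₁ D₂ ε}

/-- Let `p, q` be (Morse) functions on a compact manifold, `p` with critical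
points `c₁, …, c_k` having pairwise distinct critical values and `q` with critical points
`c₁', …, c_k'` (matched indexwise).  The persistence diagrams `D_p, D_q` of the
upper-level-set filtrations have their off-diagonal points with coordinates among the
respective critical values, each critical value being a coordinate of exactly one point,
and they satisfy the stability bound `W∞(D_p, D_q) ≤ ‖p − q‖_∞`.  If
`a = min_{i ≠ j} |p(c_i) − p(c_j)|` and `b = max_j |p(c_j) − q(c_j')|` satisfy
`b ≤ a/2 − ‖p − q‖_∞` and `a/2 > 2‖p − q‖_∞`, then `W∞(D_p, D_q) = b`. -/
theorem bottleneck_eq_max_critical_gap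
    {M : Type*} [TopologicalSpace M] [CompactSpace M] [Nonempty M]
    (p q : C(M, ℝ)) (k : ℕ) (hk : 2 ≤ k) (c c' : Fin k → M)
    (hinj : Function.Injective (fun i => p (c i)))
    (Dp Dq : Finset (ℝ × ℝ))
    (hDp : ∀ z ∈ Dp, z.1 ≠ z.2 ∧ (∃ i, z.1 = p (c i)) ∧ (∃ j, z.2 = p (c j)))
    (hDq : ∀ w ∈ Dq, w.1 ≠ w.2 ∧ (∃ i, w.1 = q (c' i)) ∧ (∃ j, w.2 = q (c' j)))
    (hDp1 : ∀ i : Fin k, ∃! z, z ∈ Dp ∧ (z.1 = p (c i) ∨ z.2 = p (c i)))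
    (hDq1 : ∀ i : Fin k, ∃! w, w ∈ Dq ∧ (w.1 = q (c' i) ∨ w.2 = q (c' i)))
    (hstab : bottleneck Dp Dq ≤ ‖p - q‖)
    (a b : ℝ)
    (ha : a = sInf {v : ℝ | ∃ i j : Fin k, i ≠ j ∧ v = |p (c i) - p (c j)|})
    (hb : b = sSup {v : ℝ | ∃ j : Fin k, v = |p (c j) - q (c' j)|})
    (h1 : b ≤ a / 2 - ‖p - q‖) (h2 : 2 * ‖p - q‖ < a / 2) :
    bottleneck Dp Dq = b := by

  classical
  have hpq0 : (0:ℝ) ≤ ‖p - q‖ := norm_nonneg _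
  have ha0 : 0 < a := by linarith
  have ha' : ∀ i j : Fin k, i ≠ j → a ≤ |p (c i) - p (c j)| := by
    intro i j hij
    rw [ha]
    exact csInf_le ⟨0, by rintro v ⟨i', j', -, rfl⟩; positivity⟩ ⟨i, j, hij, rfl⟩
  have hbdd : BddAbove {v : ℝ | ∃ j : Fin k, v = |p (c j) - q (c' j)|} := by
    apply Set.Finite.bddAbove
    apply Set.Finite.subset (Set.finite_range (fun j : Fin k => |p (c j) - q (c' j)|))
    rintro v ⟨j, rfl⟩
    exact ⟨j, rfl⟩
  have hb' : ∀ j : Fin k, |p (c j) - q (c' j)| ≤ b := by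
    intro j; rw [hb]; exact le_csSup hbdd ⟨j, rfl⟩
  have i0 : Fin k := ⟨0, by omega⟩
  have hb0 : 0 ≤ b := le_trans (abs_nonneg _) (hb' i0)
  -- key index-identification lemma
  have key : ∀ ε : ℝ, ε + b < a → ∀ z ∈ Dp, ∀ w ∈ Dq, linfDist z w ≤ ε →
      ∀ i : Fin k, (z.1 = p (c i) → w.1 = q (c' i)) ∧ (z.2 = p (c i) → w.2 = q (c' i)) := by
    intro ε hεa z hz w hw hd i
    obtain ⟨-, ⟨r, hr⟩, ⟨s, hs⟩⟩ := hDq w hw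
    have h1' : |z.1 - w.1| ≤ ε := le_trans (le_max_left _ _) hd
    have h2' : |z.2 - w.2| ≤ ε := le_trans (le_max_right _ _) hd
    constructor
    · intro hzi
      rcases eq_or_ne i r with rfl | hir
      · exact hr
      · exfalso
        have hb1 := hb' r
        have hlo : a ≤ |p (c i) - p (c r)| := ha' i r hir
        have tri : |p (c i) - p (c r)| ≤ |p (c i) - q (c' r)| + |q (c' r) - p (c r)| :=
          abs_sub_le _ _ _
        rw [hzi, hr] at h1'
        rw [abs_sub_comm] at hb1
        linarith
    · intro hzi
      rcases eq_or_ne i s with rfl | his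
      · exact hs
      · exfalso
        have hb1 := hb' s
        have hlo : a ≤ |p (c i) - p (c s)| := ha' i s his
        have tri : |p (c i) - p (c s)| ≤ |p (c i) - q (c' s)| + |q (c' s) - p (c s)| :=
          abs_sub_le _ _ _
        rw [hzi, hs] at h2'
        rw [abs_sub_comm] at hb1
        linarith
  -- every point of Dp is matched when ε < a/2
  have matched : ∀ (ε : ℝ) (Mset : Finset ((ℝ × ℝ) × (ℝ × ℝ))),
      (∀ z ∈ Dp, (∀ pr ∈ Mset, pr.1 ≠ z) → diagDist z ≤ ε) → ε < a / 2 →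
      ∀ z ∈ Dp, ∃ pr ∈ Mset, pr.1 = z := by
    intro ε Mset h3 hεa z hz
    by_contra hcon
    push_neg at hcon
    have hd := h3 z hz hcon
    obtain ⟨hne, ⟨i, hi⟩, ⟨j, hj⟩⟩ := hDp z hz
    have hij : i ≠ j := by rintro rfl; exact hne (hi.trans hj.symm)
    have hlo : a ≤ |z.1 - z.2| := by rw [hi, hj]; exact ha' i j hij
    have hdd : diagDist z = |z.1 - z.2| / 2 := rfl
    linarith [hdd ▸ hd]
  -- the set defining the bottleneck distance is nonempty
  have hSne : {ε : ℝ | 0 ≤ ε ∧ IsMatching Dp Dq ε}.Nonempty := by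
    set s : Finset ℝ := insert (0:ℝ) ((Dp ∪ Dq).image diagDist) with hs
    have hsne : s.Nonempty := ⟨0, Finset.mem_insert_self _ _⟩
    refine ⟨s.max' hsne, s.le_max' 0 (Finset.mem_insert_self _ _), ∅, ?_, ?_, ?_, ?_⟩
    · intro pr hpr; simp at hpr
    · intro pr hpr; simp at hpr
    · intro z hz _
      exact s.le_max' _ (Finset.mem_insert_of_mem
        (Finset.mem_image_of_mem _ (Finset.mem_union_left _ hz)))
    · intro w hw _
      exact s.le_max' _ (Finset.mem_insert_of_mem
        (Finset.mem_image_of_mem _ (Finset.mem_union_right _ hw)))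
  apply le_antisymm
  · -- bottleneck ≤ b
    have h4 : ‖p - q‖ < a / 4 := by linarith
    have hlt : sInf {ε : ℝ | 0 ≤ ε ∧ IsMatching Dp Dq ε} < a / 4 := lt_of_le_of_lt hstab h4
    obtain ⟨ε, hεS, hεa4⟩ := exists_lt_of_csInf_lt hSne hlt
    obtain ⟨hε0, Mset, hM1, hM2, hM3, hM4⟩ := hεS
    have hεhalf : ε < a / 2 := by linarith
    have hεb : ε + b < a := by linarith
    apply csInf_le ⟨0, fun x hx => hx.1⟩
    refine ⟨hb0, Mset, ?_, hM2, ?_, ?_⟩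
    · intro pr hpr
      obtain ⟨hp1, hp2, hp3⟩ := hM1 pr hpr
      refine ⟨hp1, hp2, ?_⟩
      obtain ⟨-, ⟨i, hi⟩, ⟨j, hj⟩⟩ := hDp pr.1 hp1
      have k1 := (key ε hεb pr.1 hp1 pr.2 hp2 hp3 i).1 hi
      have k2 := (key ε hεb pr.1 hp1 pr.2 hp2 hp3 j).2 hj
      have : linfDist pr.1 pr.2 = max |pr.1.1 - pr.2.1| |pr.1.2 - pr.2.2| := rfl
      rw [this]
      apply max_le
      · rw [hi, k1]; exact hb' i
      · rw [hj, k2]; exact hb' j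
    · intro z hz hun
      exfalso
      obtain ⟨pr, hprM, hpr1⟩ := matched ε Mset hM3 hεhalf z hz
      exact hun pr hprM hpr1
    · intro w hw hun
      exfalso
      obtain ⟨-, ⟨r, hr⟩, -⟩ := hDq w hw
      obtain ⟨z, ⟨hzDp, hzc⟩, -⟩ := hDp1 r
      obtain ⟨pr, hprM, hpr1⟩ := matched ε Mset hM3 hεhalf z hzDp
      obtain ⟨hp1, hp2, hp3⟩ := hM1 pr hprM
      have hcoord : pr.2.1 = q (c' r) ∨ pr.2.2 = q (c' r) := by
        rcases hzc with h | h
        · exact Or.inl ((key ε hεb pr.1 hp1 pr.2 hp2 hp3 r).1 (by rw [hpr1]; exact h))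
        · exact Or.inr ((key ε hεb pr.1 hp1 pr.2 hp2 hp3 r).2 (by rw [hpr1]; exact h))
      obtain ⟨w0, -, huniq⟩ := hDq1 r
      have e1 : pr.2 = w0 := huniq pr.2 ⟨hp2, hcoord⟩
      have e2 : w = w0 := huniq w ⟨hw, Or.inl hr⟩
      exact hun pr hprM (e1.trans e2.symm)
  · -- b ≤ bottleneck
    apply le_csInf hSne
    rintro ε ⟨hε0, Mset, hM1, hM2, hM3, hM4⟩
    by_contra hcon
    push_neg at hcon
    have hmax : ∃ j : Fin k, ε < |p (c j) - q (c' j)| := by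
      by_contra hc2
      push_neg at hc2
      have hble : b ≤ ε := by
        rw [hb]
        exact csSup_le ⟨_, ⟨i0, rfl⟩⟩ (by rintro v ⟨j, rfl⟩; exact hc2 j)
      linarith
    obtain ⟨j, hj⟩ := hmax
    have hbj := hb' j
    have hεhalf : ε < a / 2 := by linarith
    have hεb : ε + b < a := by linarith
    obtain ⟨z, ⟨hzDp, hzc⟩, -⟩ := hDp1 j
    obtain ⟨pr, hprM, hpr1⟩ := matched ε Mset hM3 hεhalf z hzDp
    obtain ⟨hp1, hp2, hp3⟩ := hM1 pr hprM
    rcases hzc with h | h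
    · have hc1 := (key ε hεb pr.1 hp1 pr.2 hp2 hp3 j).1 (by rw [hpr1]; exact h)
      have h1' : |pr.1.1 - pr.2.1| ≤ ε := le_trans (le_max_left _ _) hp3
      rw [hpr1, h, hc1] at h1'
      linarith
    · have hc2 := (key ε hεb pr.1 hp1 pr.2 hp2 hp3 j).2 (by rw [hpr1]; exact h)
      have h2' : |pr.1.2 - pr.2.2| ≤ ε := le_trans (le_max_right _ _) hp3
      rw [hpr1, h, hc2] at h2'
      linarith
end
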